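/- arXiv:1905.10736 — 2 statements merged into one kernel-verified Lean document; each statement's English description precedes it below -/
import Mathlib

section
/- Let n ≥ 1, let E = EuclideanSpace ℝ (Fin n), and let r be a congruence on the star partial homeomorphisms of E. Suppose there exist stars L₁ ≠ L₂ in E with r (PartialEquiv.ofSet L₁) (PartialEquiv.ofSet L₂), i.e. two distinct idempotents are r-equivalent. Then all idempotents are r-equivalent: for all stars L and L' in E, r (PartialEquiv.ofSet L) (PartialEquiv.ofSet L'). -/
noncomputable def radial {n : ℕ} (L : Set (EuclideanSpace ℝ (Fin n)))
    (u : EuclideanSpace ℝ (Fin n)) : ℝ :=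
  sSup {c : ℝ | 0 ≤ c ∧ c • u ∈ L}

def IsStar {n : ℕ} (L : Set (EuclideanSpace ℝ (Fin n))) : Prop :=
  IsCompact L ∧ (0 : EuclideanSpace ℝ (Fin n)) ∈ interior L ∧
    (∀ x ∈ L, segment ℝ 0 x ⊆ L) ∧
    ContinuousOn (radial L) (Metric.sphere (0 : EuclideanSpace ℝ (Fin n)) 1)

def IsStarPartialHomeo {n : ℕ}
    (α : PartialEquiv (EuclideanSpace ℝ (Fin n)) (EuclideanSpace ℝ (Fin n))) : Prop :=
  IsStar α.source ∧ IsStar α.target ∧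
    ContinuousOn α α.source ∧ ContinuousOn α.symm α.target ∧
    α 0 = 0 ∧ ∀ x ∈ α.source, α '' (segment ℝ 0 x) = segment ℝ 0 (α x)

def IsCongruence {n : ℕ}
    (r : PartialEquiv (EuclideanSpace ℝ (Fin n)) (EuclideanSpace ℝ (Fin n)) →
         PartialEquiv (EuclideanSpace ℝ (Fin n)) (EuclideanSpace ℝ (Fin n)) → Prop) : Prop :=
  (∀ α, IsStarPartialHomeo α → r α α) ∧
  (∀ α β, IsStarPartialHomeo α → IsStarPartialHomeo β → r α β → r β α) ∧
  (∀ α β γ, IsStarPartialHomeo α → IsStarPartialHomeo β → IsStarPartialHomeo γ →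
    r α β → r β γ → r α γ) ∧
  (∀ α α' β β', IsStarPartialHomeo α → IsStarPartialHomeo α' →
    IsStarPartialHomeo β → IsStarPartialHomeo β' →
    α ≈ α' → β ≈ β' → (r α β ↔ r α' β')) ∧
  (∀ α β γ, IsStarPartialHomeo α → IsStarPartialHomeo β → IsStarPartialHomeo γ →
    r α β → r (γ.trans α) (γ.trans β) ∧ r (α.trans γ) (β.trans γ))

namespace Star16

variable {n : ℕ}

local notation "E" => EuclideanSpace ℝ (Fin n)
local notation "Sph" => Metric.sphere (0 : EuclideanSpace ℝ (Fin n)) 1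

def st (σ : EuclideanSpace ℝ (Fin n) → ℝ) : Set (EuclideanSpace ℝ (Fin n)) :=
  {x | x = 0 ∨ ‖x‖ ≤ σ (‖x‖⁻¹ • x)}

def Nice (σ : EuclideanSpace ℝ (Fin n) → ℝ) : Prop :=
  ContinuousOn σ (Metric.sphere (0 : EuclideanSpace ℝ (Fin n)) 1) ∧
    ∀ u ∈ Metric.sphere (0 : EuclideanSpace ℝ (Fin n)) 1, 0 < σ u

variable (hn : 1 ≤ n)

lemma dir_mem {x : E} (hx : x ≠ 0) : ‖x‖⁻¹ • x ∈ Sph := by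
  exact mem_sphere_zero_iff_norm.2 (norm_smul_inv_norm hx)

lemma dir_smul {x : E} (hx : x ≠ 0) : ‖x‖ • (‖x‖⁻¹ • x) = x := by
  rw [smul_smul, mul_inv_cancel₀ (norm_ne_zero_iff.2 hx), one_smul]

lemma dir_of_smul {u : E} (hu : u ∈ Sph) {c : ℝ} (hc : 0 < c) :
    ‖c • u‖⁻¹ • (c • u) = u := by
  have hu1 : ‖u‖ = 1 := by simpa using hu
  rw [norm_smul, hu1, Real.norm_eq_abs, abs_of_pos hc, mul_one, smul_smul,
    inv_mul_cancel₀ hc.ne', one_smul]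

lemma zero_mem_st (σ : E → ℝ) : (0 : E) ∈ st σ := Or.inl rfl

lemma smul_mem_st_iff {σ : E → ℝ} {u : E} (hu : u ∈ Sph) (hσu : 0 < σ u) {c : ℝ}
    (hc : 0 ≤ c) : c • u ∈ st σ ↔ c ≤ σ u := by
  have hu1 : ‖u‖ = 1 := by simpa using hu
  rcases eq_or_lt_of_le hc with rfl | hc'
  · simp [zero_mem_st, hσu.le]
  · have hne : c • u ≠ 0 := by
      intro h
      have : ‖c • u‖ = 0 := by simp [h]
      rw [norm_smul, hu1, mul_one, Real.norm_eq_abs, abs_of_pos hc'] at this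
      exact hc'.ne' this
    have hnorm : ‖c • u‖ = c := by
      rw [norm_smul, hu1, mul_one, Real.norm_eq_abs, abs_of_pos hc']
    constructor
    · rintro (h | h)
      · exact absurd h hne
      · rwa [dir_of_smul hu hc', hnorm] at h
    · intro h
      right
      rwa [dir_of_smul hu hc', hnorm]

lemma mem_st_iff {σ : E → ℝ} {x : E} (hx : x ≠ 0) :
    x ∈ st σ ↔ ‖x‖ ≤ σ (‖x‖⁻¹ • x) := by
  constructor
  · rintro (h | h); · exact absurd h hx
    · exact h
  · exact Or.inr

lemma st_congr {σ τ : E → ℝ} (h : ∀ u ∈ Sph, σ u = τ u) : st σ = st τ := by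
  ext x
  rcases eq_or_ne x 0 with rfl | hx
  · simp [zero_mem_st]
  · rw [mem_st_iff hx, mem_st_iff hx, h _ (dir_mem hx)]

lemma st_inter (σ τ : E → ℝ) : st σ ∩ st τ = st (fun u => min (σ u) (τ u)) := by
  ext x
  rcases eq_or_ne x 0 with rfl | hx
  · simp [zero_mem_st]
  · simp only [Set.mem_inter_iff, mem_st_iff hx, le_min_iff]

lemma st_mono {σ τ : E → ℝ} (h : ∀ u ∈ Sph, σ u ≤ τ u) : st σ ⊆ st τ := by
  intro x hx
  rcases eq_or_ne x 0 with rfl | hx0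
  · exact zero_mem_st τ
  · rw [mem_st_iff hx0] at hx ⊢
    exact hx.trans (h _ (dir_mem hx0))


lemma nontrivial_E (hn : 1 ≤ n) : Nontrivial (EuclideanSpace ℝ (Fin n)) := by
  apply Module.nontrivial_of_finrank_pos (R := ℝ)
  rw [finrank_euclideanSpace_fin]
  omega

lemma sph_nonempty (hn : 1 ≤ n) : (Metric.sphere (0 : EuclideanSpace ℝ (Fin n)) 1).Nonempty := by
  haveI := nontrivial_E hn
  exact NormedSpace.sphere_nonempty.2 zero_le_one

lemma sph_compact : IsCompact (Metric.sphere (0 : EuclideanSpace ℝ (Fin n)) 1) :=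
  isCompact_sphere 0 1

lemma Nice.exists_min {σ : E → ℝ} (hn : 1 ≤ n) (hσ : Nice σ) :
    ∃ ε > 0, ∀ u ∈ Sph, ε ≤ σ u := by
  obtain ⟨u₁, hu₁, hmin⟩ := sph_compact.exists_isMinOn (sph_nonempty hn) hσ.1
  exact ⟨σ u₁, hσ.2 u₁ hu₁, fun u hu => hmin hu⟩

lemma Nice.exists_max {σ : E → ℝ} (hn : 1 ≤ n) (hσ : Nice σ) :
    ∃ M > 0, ∀ u ∈ Sph, σ u ≤ M := by
  obtain ⟨u₁, hu₁, hmax⟩ := sph_compact.exists_isMaxOn (sph_nonempty hn) hσ.1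
  exact ⟨σ u₁, hσ.2 u₁ hu₁, fun u hu => hmax hu⟩

lemma segment_zero (x : EuclideanSpace ℝ (Fin n)) :
    segment ℝ (0 : EuclideanSpace ℝ (Fin n)) x = (fun t : ℝ => t • x) '' Set.Icc 0 1 := by
  rw [segment_eq_image]
  simp

lemma st_compact {σ : E → ℝ} (hn : 1 ≤ n) (hσ : Nice σ) : IsCompact (st σ) := by
  have key : st σ = (fun p : (EuclideanSpace ℝ (Fin n)) × ℝ => (p.2 * σ p.1) • p.1) ''
      (Sph ×ˢ Set.Icc (0:ℝ) 1) := by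
    ext x
    constructor
    · intro hx
      rcases eq_or_ne x 0 with rfl | hx0
      · obtain ⟨u, hu⟩ := sph_nonempty hn
        exact ⟨(u, 0), ⟨hu, by simp⟩, by simp⟩
      · have hu : ‖x‖⁻¹ • x ∈ Sph := dir_mem hx0
        have hσu : 0 < σ (‖x‖⁻¹ • x) := hσ.2 _ hu
        have hle : ‖x‖ ≤ σ (‖x‖⁻¹ • x) := (mem_st_iff hx0).1 hx
        refine ⟨(‖x‖⁻¹ • x, ‖x‖ / σ (‖x‖⁻¹ • x)), ⟨hu, ?_, ?_⟩, ?_⟩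
        · positivity
        · exact div_le_one_of_le₀ hle hσu.le
        · simp only
          rw [div_mul_cancel₀ _ hσu.ne', dir_smul hx0]
    · rintro ⟨⟨u, t⟩, ⟨hu, ht0, ht1⟩, rfl⟩
      have hσu : 0 < σ u := hσ.2 _ hu
      refine (smul_mem_st_iff hu hσu (by positivity)).2 ?_
      calc t * σ u ≤ 1 * σ u := by gcongr
        _ = σ u := one_mul _
  rw [key]
  apply (sph_compact.prod isCompact_Icc).image_of_continuousOn
  apply ContinuousOn.fun_smul
  · exact (continuousOn_snd.mul (hσ.1.comp continuousOn_fst (fun p hp => hp.1)))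
  · exact continuousOn_fst

lemma st_zero_interior {σ : E → ℝ} (hn : 1 ≤ n) (hσ : Nice σ) :
    (0 : EuclideanSpace ℝ (Fin n)) ∈ interior (st σ) := by
  obtain ⟨ε, hε, hεσ⟩ := hσ.exists_min hn
  refine mem_interior.2 ⟨Metric.ball 0 ε, ?_, Metric.isOpen_ball, Metric.mem_ball_self hε⟩
  intro x hx
  rcases eq_or_ne x 0 with rfl | hx0
  · exact zero_mem_st σ
  · rw [mem_st_iff hx0]
    have : ‖x‖ < ε := by simpa using hx
    exact this.le.trans (hεσ _ (dir_mem hx0))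

lemma st_starShaped {σ : E → ℝ} : ∀ x ∈ st σ, segment ℝ 0 x ⊆ st σ := by
  intro x hx y hy
  rw [segment_zero] at hy
  obtain ⟨t, ⟨ht0, ht1⟩, rfl⟩ := hy
  rcases eq_or_ne x 0 with rfl | hx0
  · simpa using zero_mem_st σ
  rcases eq_or_lt_of_le ht0 with rfl | ht0'
  · simpa using zero_mem_st σ
  have htx : t • x ≠ 0 := smul_ne_zero ht0'.ne' hx0
  rw [mem_st_iff htx]
  have hdir : ‖t • x‖⁻¹ • (t • x) = ‖x‖⁻¹ • x := by
    rw [norm_smul, Real.norm_eq_abs, abs_of_pos ht0', mul_inv, ← smul_smul,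
      smul_comm ((‖x‖:ℝ)⁻¹) t, inv_smul_smul₀ ht0'.ne']
  rw [hdir]
  have hnorm : ‖t • x‖ ≤ ‖x‖ := by
    rw [norm_smul, Real.norm_eq_abs, abs_of_pos ht0']
    calc t * ‖x‖ ≤ 1 * ‖x‖ := by gcongr
      _ = ‖x‖ := one_mul _
  exact hnorm.trans ((mem_st_iff hx0).1 hx)

lemma radial_st {σ : E → ℝ} (hσ : Nice σ) {u : E} (hu : u ∈ Sph) :
    radial (st σ) u = σ u := by
  have hσu : 0 < σ u := hσ.2 _ hu
  have h : {c : ℝ | 0 ≤ c ∧ c • u ∈ st σ} = Set.Icc 0 (σ u) := by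
    ext c
    constructor
    · rintro ⟨hc0, hc⟩
      exact ⟨hc0, (smul_mem_st_iff hu hσu hc0).1 hc⟩
    · rintro ⟨hc0, hc1⟩
      exact ⟨hc0, (smul_mem_st_iff hu hσu hc0).2 hc1⟩
  rw [radial, h, csSup_Icc hσu.le]

lemma st_isStar {σ : E → ℝ} (hn : 1 ≤ n) (hσ : Nice σ) : IsStar (st σ) := by
  refine ⟨st_compact hn hσ, st_zero_interior hn hσ, st_starShaped, ?_⟩
  exact hσ.1.congr (fun u hu => radial_st hσ hu)


lemma isStar_radial_set {L : Set (EuclideanSpace ℝ (Fin n))} (hL : IsStar L) {u : E}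
    (hu : u ∈ Sph) :
    {c : ℝ | 0 ≤ c ∧ c • u ∈ L} = Set.Icc 0 (radial L u) ∧ 0 < radial L u := by
  obtain ⟨hcomp, hint, hstar, hcont⟩ := hL
  have hu1 : ‖u‖ = 1 := by simpa using hu
  set T := {c : ℝ | 0 ≤ c ∧ c • u ∈ L} with hT
  have h0L : (0 : EuclideanSpace ℝ (Fin n)) ∈ L := interior_subset hint
  have h0T : (0:ℝ) ∈ T := ⟨le_refl _, by simpa using h0L⟩
  obtain ⟨R, hR⟩ := isBounded_iff_forall_norm_le.1 hcomp.isBounded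
  have hbdd : BddAbove T := by
    refine ⟨R, fun c hc => ?_⟩
    have := hR _ hc.2
    rwa [norm_smul, hu1, mul_one, Real.norm_eq_abs, abs_of_nonneg hc.1] at this
  have hclosed : IsClosed T := by
    have : T = Set.Ici (0:ℝ) ∩ (fun c : ℝ => c • u) ⁻¹' L := rfl
    rw [this]
    exact isClosed_Ici.inter (hcomp.isClosed.preimage (by continuity))
  have hmem : radial L u ∈ T := hclosed.csSup_mem ⟨0, h0T⟩ hbdd
  -- positivity
  obtain ⟨ε, hε, hball⟩ := Metric.mem_nhds_iff.1 (mem_interior_iff_mem_nhds.1 hint)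
  have hpos : 0 < radial L u := by
    have hmem2 : (ε/2 : ℝ) ∈ T := by
      refine ⟨by positivity, hball ?_⟩
      simp only [Metric.mem_ball, dist_zero_right, norm_smul, hu1, mul_one, Real.norm_eq_abs,
        abs_of_pos (by positivity : (0:ℝ) < ε/2)]
      linarith
    have h1 := le_csSup hbdd hmem2
    have h2 : radial L u = sSup T := rfl
    rw [h2]
    linarith
  refine ⟨?_, hpos⟩
  ext c
  constructor
  · intro hc
    exact ⟨hc.1, le_csSup hbdd hc⟩
  · rintro ⟨hc0, hc1⟩
    refine ⟨hc0, ?_⟩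
    have hseg : c • u ∈ segment ℝ 0 (radial L u • u) := by
      rw [segment_zero]
      refine ⟨c / radial L u, ⟨by positivity, div_le_one_of_le₀ hc1 hpos.le⟩, ?_⟩
      show (c / radial L u) • (radial L u • u) = c • u
      rw [smul_smul, div_mul_cancel₀ _ hpos.ne']
    exact hstar _ hmem.2 hseg

lemma isStar_nice {L : Set (EuclideanSpace ℝ (Fin n))} (hL : IsStar L) : Nice (radial L) :=
  ⟨hL.2.2.2, fun u hu => (isStar_radial_set hL hu).2⟩

lemma isStar_eq_st {L : Set (EuclideanSpace ℝ (Fin n))} (hL : IsStar L) :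
    L = st (radial L) := by
  ext x
  rcases eq_or_ne x 0 with rfl | hx0
  · simp [zero_mem_st, interior_subset hL.2.1]
  · have hu : ‖x‖⁻¹ • x ∈ Sph := dir_mem hx0
    obtain ⟨hset, hpos⟩ := isStar_radial_set hL hu
    rw [mem_st_iff hx0]
    constructor
    · intro hx
      have : ‖x‖ ∈ {c : ℝ | 0 ≤ c ∧ c • (‖x‖⁻¹ • x) ∈ L} := by
        refine ⟨norm_nonneg _, ?_⟩
        rw [dir_smul hx0]
        exact hx
      rw [hset] at this
      exact this.2
    · intro hle
      have : ‖x‖ ∈ Set.Icc 0 (radial L (‖x‖⁻¹ • x)) := ⟨norm_nonneg _, hle⟩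
      rw [← hset] at this
      have h2 : ‖x‖ • ‖x‖⁻¹ • x ∈ L := this.2
      rwa [dir_smul hx0] at h2


lemma dir_smul_pos {x : E} (hx : x ≠ 0) {t : ℝ} (ht : 0 < t) :
    ‖t • x‖⁻¹ • (t • x) = ‖x‖⁻¹ • x := by
  rw [norm_smul, Real.norm_eq_abs, abs_of_pos ht, mul_inv, ← smul_smul,
    smul_comm ((‖x‖:ℝ)⁻¹) t, inv_smul_smul₀ ht.ne']

noncomputable def rmap (σ τ : EuclideanSpace ℝ (Fin n) → ℝ) (x : EuclideanSpace ℝ (Fin n)) :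
    EuclideanSpace ℝ (Fin n) :=
  (τ (‖x‖⁻¹ • x) / σ (‖x‖⁻¹ • x)) • x

lemma rmap_zero (σ τ : E → ℝ) : rmap σ τ 0 = 0 := smul_zero _

lemma rmap_apply_ne {σ τ : E → ℝ} {x : E} :
    rmap σ τ x = (τ (‖x‖⁻¹ • x) / σ (‖x‖⁻¹ • x)) • x := rfl

lemma rmap_smul_pos {σ τ : E → ℝ} {x : E} (hx : x ≠ 0) {t : ℝ} (ht : 0 < t) :
    rmap σ τ (t • x) = t • rmap σ τ x := by
  rw [rmap_apply_ne, rmap_apply_ne, dir_smul_pos hx ht, smul_comm]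

lemma rmap_mem {σ τ : E → ℝ} (hσ : Nice σ) (hτ : Nice τ) {x : E} (hx : x ∈ st σ) :
    rmap σ τ x ∈ st τ := by
  rcases eq_or_ne x 0 with rfl | hx0
  · rw [rmap_zero]; exact zero_mem_st τ
  · set u := ‖x‖⁻¹ • x with hu_def
    have hu : u ∈ Sph := dir_mem hx0
    have hσu : 0 < σ u := hσ.2 _ hu
    have hτu : 0 < τ u := hτ.2 _ hu
    have hxσ : ‖x‖ ≤ σ u := (mem_st_iff hx0).1 hx
    have hx_eq : x = ‖x‖ • u := (dir_smul hx0).symm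
    have : rmap σ τ x = (τ u / σ u * ‖x‖) • u := by
      rw [rmap_apply_ne, ← hu_def]
      conv_lhs => rw [hx_eq]
      rw [smul_smul]
    rw [this]
    refine (smul_mem_st_iff hu hτu (by positivity)).2 ?_
    rw [div_mul_eq_mul_div, div_le_iff₀ hσu]
    calc τ u * ‖x‖ ≤ τ u * σ u := by nlinarith
      _ = τ u * σ u := rfl

lemma rmap_invol {σ τ : E → ℝ} (hσ : Nice σ) (hτ : Nice τ) (x : EuclideanSpace ℝ (Fin n)) :
    rmap τ σ (rmap σ τ x) = x := by
  rcases eq_or_ne x 0 with rfl | hx0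
  · rw [rmap_zero, rmap_zero]
  · set u := ‖x‖⁻¹ • x with hu_def
    have hu : u ∈ Sph := dir_mem hx0
    have hσu : 0 < σ u := hσ.2 _ hu
    have hτu : 0 < τ u := hτ.2 _ hu
    have h1 : rmap σ τ x = (τ u / σ u) • x := rfl
    rw [h1, rmap_apply_ne]
    have hc : (0:ℝ) < τ u / σ u := by positivity
    have hdir : ‖(τ u / σ u) • x‖⁻¹ • ((τ u / σ u) • x) = u := by
      rw [dir_smul_pos hx0 hc]
    rw [hdir, smul_smul]
    rw [div_mul_div_comm, mul_comm (σ u) (τ u), div_self (by positivity), one_smul]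

lemma rmap_continuousOn {σ τ : E → ℝ} (hn : 1 ≤ n) (hσ : Nice σ) (hτ : Nice τ) :
    ContinuousOn (rmap σ τ) (st σ) := by
  have hg : ContinuousOn (fun y : EuclideanSpace ℝ (Fin n) => ‖y‖⁻¹ • y) {x : EuclideanSpace ℝ (Fin n) | x ≠ 0} := by
    refine ContinuousOn.fun_smul ?_ continuousOn_id
    exact (continuous_norm.continuousOn).inv₀ (fun x hx => norm_ne_zero_iff.2 hx)
  have hmaps : Set.MapsTo (fun y : EuclideanSpace ℝ (Fin n) => ‖y‖⁻¹ • y)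
      {x : EuclideanSpace ℝ (Fin n) | x ≠ 0} Sph := fun y hy => dir_mem hy
  have hcont_ne : ContinuousOn (rmap σ τ) {x : EuclideanSpace ℝ (Fin n) | x ≠ 0} := by
    refine ContinuousOn.fun_smul ?_ continuousOn_id
    exact ((hτ.1.comp hg hmaps).div (hσ.1.comp hg hmaps)
      (fun x hx => (hσ.2 _ (dir_mem hx)).ne'))
  intro x hx
  rcases eq_or_ne x 0 with rfl | hx0
  · obtain ⟨ε, hε, hεσ⟩ := hσ.exists_min hn
    obtain ⟨M, hM, hτM⟩ := hτ.exists_max hn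
    have hbound : ∀ᶠ y in nhdsWithin 0 (st σ), ‖rmap σ τ y‖ ≤ (M/ε) * ‖y‖ := by
      filter_upwards [self_mem_nhdsWithin] with y hy
      rcases eq_or_ne y 0 with rfl | hy0
      · simp [rmap_zero]
      · have hu : ‖y‖⁻¹ • y ∈ Sph := dir_mem hy0
        have hσu : 0 < σ (‖y‖⁻¹ • y) := hσ.2 _ hu
        have hτu : 0 < τ (‖y‖⁻¹ • y) := hτ.2 _ hu
        rw [rmap_apply_ne, norm_smul, Real.norm_eq_abs, abs_of_pos (by positivity)]
        gcongr
        · exact hτM _ hu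
        · exact hεσ _ hu
    have h1 : Filter.Tendsto (fun y : EuclideanSpace ℝ (Fin n) => (M/ε) * ‖y‖)
        (nhds (0 : EuclideanSpace ℝ (Fin n))) (nhds 0) := by
      have h2 : Filter.Tendsto (fun y : EuclideanSpace ℝ (Fin n) => ‖y‖)
          (nhds (0 : EuclideanSpace ℝ (Fin n))) (nhds 0) := by
        have h3 := (continuous_norm :
          Continuous fun y : EuclideanSpace ℝ (Fin n) => ‖y‖).tendsto 0
        rwa [norm_zero] at h3
      simpa using h2.const_mul (M/ε)
    have key : Filter.Tendsto (rmap σ τ) (nhdsWithin 0 (st σ))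
        (nhds (0 : EuclideanSpace ℝ (Fin n))) :=
      squeeze_zero_norm' hbound (h1.mono_left nhdsWithin_le_nhds)
    have h0 : rmap σ τ (0 : EuclideanSpace ℝ (Fin n)) = 0 := rmap_zero σ τ
    unfold ContinuousWithinAt
    rw [h0]
    exact key
  · exact (hcont_ne.continuousAt (isOpen_ne.mem_nhds hx0)).continuousWithinAt

lemma rmap_segment {σ τ : E → ℝ} (x : EuclideanSpace ℝ (Fin n)) :
    rmap σ τ '' segment ℝ 0 x = segment ℝ 0 (rmap σ τ x) := by
  rcases eq_or_ne x 0 with rfl | hx0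
  · simp [rmap_zero, segment_same]
  · rw [segment_zero, segment_zero, ← Set.image_comp]
    apply Set.image_congr
    intro t ht
    rcases eq_or_lt_of_le ht.1 with rfl | ht0
    · simp [rmap_zero]
    · exact rmap_smul_pos hx0 ht0

noncomputable def radialPE (σ τ : EuclideanSpace ℝ (Fin n) → ℝ) (hσ : Nice σ) (hτ : Nice τ) :
    PartialEquiv (EuclideanSpace ℝ (Fin n)) (EuclideanSpace ℝ (Fin n)) where
  toFun := rmap σ τ
  invFun := rmap τ σ
  source := st σ
  target := st τ
  map_source' _ hx := rmap_mem hσ hτ hx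
  map_target' _ hx := rmap_mem hτ hσ hx
  left_inv' x _ := rmap_invol hσ hτ x
  right_inv' x _ := rmap_invol hτ hσ x

lemma radialPE_SPH {σ τ : E → ℝ} (hn : 1 ≤ n) (hσ : Nice σ) (hτ : Nice τ) :
    IsStarPartialHomeo (radialPE σ τ hσ hτ) := by
  refine ⟨st_isStar hn hσ, st_isStar hn hτ, rmap_continuousOn hn hσ hτ,
    rmap_continuousOn hn hτ hσ, rmap_zero σ τ, fun x _ => rmap_segment x⟩


section Iso

lemma iso_mem_st {σ : E → ℝ} (f : (EuclideanSpace ℝ (Fin n)) ≃ₗᵢ[ℝ] (EuclideanSpace ℝ (Fin n)))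
    {x : E} (hx : x ∈ st σ) : f x ∈ st (fun y => σ (f.symm y)) := by
  rcases eq_or_ne x 0 with rfl | hx0
  · rw [map_zero]; exact zero_mem_st _
  · have hfx : f x ≠ 0 := by
      simp only [ne_eq, f.map_eq_zero_iff]
      exact hx0
    rw [mem_st_iff hfx]
    have hnorm : ‖f x‖ = ‖x‖ := f.norm_map x
    have hdir : ‖f x‖⁻¹ • (f x) = f (‖x‖⁻¹ • x) := by
      rw [hnorm, ← f.map_smul]
    rw [hdir, hnorm, f.symm_apply_apply]
    exact (mem_st_iff hx0).1 hx

lemma nice_iso {σ : E → ℝ} (hσ : Nice σ)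
    (f : (EuclideanSpace ℝ (Fin n)) ≃ₗᵢ[ℝ] (EuclideanSpace ℝ (Fin n))) :
    Nice (fun y => σ (f.symm y)) := by
  have hmaps : Set.MapsTo (fun y : EuclideanSpace ℝ (Fin n) => f.symm y) Sph Sph := by
    intro u hu
    simp only [Set.mem_setOf_eq]
    have : ‖f.symm u‖ = ‖u‖ := f.symm.norm_map u
    simp only [mem_sphere_iff_norm, sub_zero] at hu ⊢
    rw [this, hu]
  exact ⟨hσ.1.comp f.symm.continuous.continuousOn hmaps, fun u hu => hσ.2 _ (hmaps hu)⟩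

noncomputable def isoPE (f : (EuclideanSpace ℝ (Fin n)) ≃ₗᵢ[ℝ] (EuclideanSpace ℝ (Fin n)))
    (σ : EuclideanSpace ℝ (Fin n) → ℝ) :
    PartialEquiv (EuclideanSpace ℝ (Fin n)) (EuclideanSpace ℝ (Fin n)) where
  toFun := f
  invFun := f.symm
  source := st σ
  target := st (fun y => σ (f.symm y))
  map_source' _ hx := iso_mem_st f hx
  map_target' x hx := by
    have h := iso_mem_st (σ := fun y => σ (f.symm y)) f.symm hx
    have heq : (fun y => σ (f.symm (f.symm.symm y))) = σ := by
      funext y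
      simp
    rwa [heq] at h
  left_inv' x _ := f.symm_apply_apply x
  right_inv' x _ := f.apply_symm_apply x

lemma iso_segment (f : (EuclideanSpace ℝ (Fin n)) ≃ₗᵢ[ℝ] (EuclideanSpace ℝ (Fin n)))
    (x : EuclideanSpace ℝ (Fin n)) :
    f '' segment ℝ 0 x = segment ℝ 0 (f x) := by
  rw [segment_zero, segment_zero, ← Set.image_comp]
  apply Set.image_congr
  intro t _
  exact f.map_smul t x

lemma isoPE_SPH {σ : E → ℝ} (hn : 1 ≤ n) (hσ : Nice σ)
    (f : (EuclideanSpace ℝ (Fin n)) ≃ₗᵢ[ℝ] (EuclideanSpace ℝ (Fin n))) :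
    IsStarPartialHomeo (isoPE f σ) := by
  refine ⟨st_isStar hn hσ, st_isStar hn (nice_iso hσ f), f.continuous.continuousOn,
    f.symm.continuous.continuousOn, map_zero f, fun x _ => iso_segment f x⟩

end Iso

section Plumbing

lemma ofSet_SPH {L : Set (EuclideanSpace ℝ (Fin n))} (hL : IsStar L) :
    IsStarPartialHomeo (PartialEquiv.ofSet L) := by
  refine ⟨?_, ?_, ?_, ?_, rfl, ?_⟩
  · rwa [PartialEquiv.ofSet_source]
  · rwa [PartialEquiv.ofSet_target]
  · rw [PartialEquiv.ofSet_source]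
    exact continuousOn_id
  · rw [PartialEquiv.ofSet_target, PartialEquiv.ofSet_symm]
    exact continuousOn_id
  · intro x _
    exact Set.image_id _

lemma SPH_congr {α β : PartialEquiv (EuclideanSpace ℝ (Fin n)) (EuclideanSpace ℝ (Fin n))}
    (hab : α ≈ β) (hα : IsStarPartialHomeo α) : IsStarPartialHomeo β := by
  obtain ⟨hs, ht, hca, hcs, h0, hseg⟩ := hα
  have hsource := PartialEquiv.EqOnSource.source_eq hab
  have htarget := PartialEquiv.EqOnSource.target_eq hab
  have heq := PartialEquiv.EqOnSource.eqOn hab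
  have heqs := PartialEquiv.EqOnSource.eqOn (PartialEquiv.EqOnSource.symm' hab)
  have h0mem : (0 : EuclideanSpace ℝ (Fin n)) ∈ α.source := interior_subset hs.2.1
  refine ⟨hsource ▸ hs, htarget ▸ ht, ?_, ?_, ?_, ?_⟩
  · rw [← hsource]
    exact hca.congr (fun x hx => (heq hx).symm)
  · rw [← htarget]
    exact hcs.congr (fun x hx => (heqs hx).symm)
  · rw [← heq h0mem, h0]
  · intro x hx
    rw [← hsource] at hx
    have hsub : segment ℝ 0 x ⊆ α.source := hs.2.2.1 x hx
    rw [← Set.image_congr (fun y hy => heq (hsub hy)), hseg x hx, heq hx]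

lemma SPH_symm {α : PartialEquiv (EuclideanSpace ℝ (Fin n)) (EuclideanSpace ℝ (Fin n))}
    (hα : IsStarPartialHomeo α) : IsStarPartialHomeo α.symm := by
  obtain ⟨hs, ht, hca, hcs, h0, hseg⟩ := hα
  have h0mem : (0 : EuclideanSpace ℝ (Fin n)) ∈ α.source := interior_subset hs.2.1
  refine ⟨ht, ?_, hcs, ?_, ?_, ?_⟩
  · rw [PartialEquiv.symm_target]
    exact hs
  · rw [PartialEquiv.symm_symm, PartialEquiv.symm_target]
    exact hca
  · have : α.symm (α 0) = 0 := α.left_inv h0mem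
    rwa [h0] at this
  · intro y hy
    have hy' : y ∈ α.target := hy
    have hx : α.symm y ∈ α.source := α.map_target hy'
    have h1 : α '' segment ℝ 0 (α.symm y) = segment ℝ 0 y := by
      rw [hseg _ hx, α.right_inv hy']
    have hsub : segment ℝ 0 (α.symm y) ⊆ α.source := hs.2.2.1 _ hx
    rw [← h1, ← Set.image_comp]
    have heqon : Set.EqOn (↑α.symm ∘ ↑α) id (segment ℝ 0 (α.symm y)) :=
      fun z hz => α.left_inv (hsub hz)
    rw [heqon.image_eq, Set.image_id]

lemma ofSet_trans_ofSet (s t : Set (EuclideanSpace ℝ (Fin n))) :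
    (PartialEquiv.ofSet s).trans (PartialEquiv.ofSet t) = PartialEquiv.ofSet (s ∩ t) := by
  refine PartialEquiv.ext (fun x => rfl) (fun x => rfl) ?_
  simp [PartialEquiv.trans_source]

end Plumbing


section Cong

variable {r : PartialEquiv (EuclideanSpace ℝ (Fin n)) (EuclideanSpace ℝ (Fin n)) →
    PartialEquiv (EuclideanSpace ℝ (Fin n)) (EuclideanSpace ℝ (Fin n)) → Prop}

lemma trans_ofSet_equiv (e : PartialEquiv (EuclideanSpace ℝ (Fin n)) (EuclideanSpace ℝ (Fin n))) :
    e.trans (PartialEquiv.ofSet e.target) ≈ e := by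
  constructor
  · rw [PartialEquiv.trans_source, PartialEquiv.ofSet_source]
    exact Set.inter_eq_left.2 (fun x hx => e.map_source hx)
  · intro x _
    rfl

lemma master {γ δ : PartialEquiv (EuclideanSpace ℝ (Fin n)) (EuclideanSpace ℝ (Fin n))}
    (hr : IsCongruence r) (hγ : IsStarPartialHomeo γ) (hδ : IsStarPartialHomeo δ)
    (hsub : δ.source ⊆ γ.source) (heq : Set.EqOn δ γ δ.source)
    (h : r (PartialEquiv.ofSet δ.source) (PartialEquiv.ofSet γ.source)) :
    r (PartialEquiv.ofSet δ.target) (PartialEquiv.ofSet γ.target) := by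
  obtain ⟨hrefl, hsymm, htrans, hresp, hcomp⟩ := hr
  have hδsymm : IsStarPartialHomeo δ.symm := SPH_symm hδ
  have hγsymm : IsStarPartialHomeo γ.symm := SPH_symm hγ
  have hCstar : IsStar δ.source := hδ.1
  have hAstar : IsStar γ.source := hγ.1
  -- step 1
  have step1 := (hcomp _ _ γ.symm (ofSet_SPH hCstar) (ofSet_SPH hAstar) hγsymm h).1
  have equiv1 : γ.symm.trans (PartialEquiv.ofSet γ.source) ≈ γ.symm := by
    have := trans_ofSet_equiv γ.symm
    rwa [PartialEquiv.symm_target] at this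
  have equiv2 : γ.symm.trans (PartialEquiv.ofSet δ.source) ≈ δ.symm := by
    constructor
    · rw [PartialEquiv.trans_source, PartialEquiv.ofSet_source, PartialEquiv.symm_source]
      ext x
      constructor
      · rintro ⟨hxt, hxc⟩
        have hc : γ.symm x ∈ δ.source := hxc
        have hx1 : x = γ (γ.symm x) := (γ.right_inv hxt).symm
        have hx2 : x = δ (γ.symm x) := by rw [heq hc]; exact hx1
        rw [hx2]
        exact δ.map_source hc
      · intro hxD
        have hc : δ.symm x ∈ δ.source := δ.map_target hxD
        have hx2 : δ (δ.symm x) = x := δ.right_inv hxD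
        have hx3 : γ (δ.symm x) = x := by rw [← heq hc, hx2]
        have hcA : δ.symm x ∈ γ.source := hsub hc
        constructor
        · rw [← hx3]
          exact γ.map_source hcA
        · show γ.symm x ∈ δ.source
          rw [← hx3, γ.left_inv hcA]
          exact hc
    · intro x hx
      rw [PartialEquiv.trans_source, PartialEquiv.ofSet_source, PartialEquiv.symm_source] at hx
      obtain ⟨hxt, hxc⟩ := hx
      have hc : γ.symm x ∈ δ.source := hxc
      show γ.symm x = δ.symm x
      have hx1 : x = γ (γ.symm x) := (γ.right_inv hxt).symm
      have hx2 : x = δ (γ.symm x) := by rw [heq hc]; exact hx1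
      calc γ.symm x = δ.symm (δ (γ.symm x)) := (δ.left_inv hc).symm
        _ = δ.symm x := by rw [← hx2]
  have hSPHt1 : IsStarPartialHomeo (γ.symm.trans (PartialEquiv.ofSet δ.source)) :=
    SPH_congr (Setoid.symm equiv2) hδsymm
  have hSPHt2 : IsStarPartialHomeo (γ.symm.trans (PartialEquiv.ofSet γ.source)) :=
    SPH_congr (Setoid.symm equiv1) hγsymm
  have step1' : r δ.symm γ.symm :=
    (hresp _ _ _ _ hSPHt1 hδsymm hSPHt2 hγsymm equiv2 equiv1).1 step1
  -- step 2
  have step2 := (hcomp _ _ γ hδsymm hγsymm hγ step1').2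
  have equiv3 : γ.symm.trans γ ≈ PartialEquiv.ofSet γ.target := PartialEquiv.symm_trans_self γ
  have equiv4 : δ.symm.trans γ ≈ PartialEquiv.ofSet δ.target := by
    constructor
    · rw [PartialEquiv.trans_source, PartialEquiv.ofSet_source, PartialEquiv.symm_source]
      apply Set.inter_eq_left.2
      intro x hx
      exact hsub (δ.map_target hx)
    · intro x hx
      rw [PartialEquiv.trans_source, PartialEquiv.symm_source] at hx
      have hxD : x ∈ δ.target := hx.1
      have hc : δ.symm x ∈ δ.source := δ.map_target hxD
      show γ (δ.symm x) = x
      rw [← heq hc, δ.right_inv hxD]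
  have hDstar : IsStar δ.target := hδ.2.1
  have hTstar : IsStar γ.target := hγ.2.1
  have hSPHt3 : IsStarPartialHomeo (δ.symm.trans γ) :=
    SPH_congr (Setoid.symm equiv4) (ofSet_SPH hDstar)
  have hSPHt4 : IsStarPartialHomeo (γ.symm.trans γ) :=
    SPH_congr (Setoid.symm equiv3) (ofSet_SPH hTstar)
  exact (hresp _ _ _ _ hSPHt3 (ofSet_SPH hDstar) hSPHt4 (ofSet_SPH hTstar) equiv4 equiv3).1 step2

lemma rel_inter (hr : IsCongruence r) {A B M : Set (EuclideanSpace ℝ (Fin n))}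
    (hA : IsStar A) (hB : IsStar B) (hM : IsStar M)
    (h : r (PartialEquiv.ofSet A) (PartialEquiv.ofSet B)) :
    r (PartialEquiv.ofSet (M ∩ A)) (PartialEquiv.ofSet (M ∩ B)) := by
  have := (hr.2.2.2.2 _ _ _ (ofSet_SPH hA) (ofSet_SPH hB) (ofSet_SPH hM) h).1
  rwa [ofSet_trans_ofSet, ofSet_trans_ofSet] at this

end Cong


section Endgame

variable {r : PartialEquiv (EuclideanSpace ℝ (Fin n)) (EuclideanSpace ℝ (Fin n)) →
    PartialEquiv (EuclideanSpace ℝ (Fin n)) (EuclideanSpace ℝ (Fin n)) → Prop}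

def REL (r : PartialEquiv (EuclideanSpace ℝ (Fin n)) (EuclideanSpace ℝ (Fin n)) →
    PartialEquiv (EuclideanSpace ℝ (Fin n)) (EuclideanSpace ℝ (Fin n)) → Prop)
    (σ τ : EuclideanSpace ℝ (Fin n) → ℝ) : Prop :=
  r (PartialEquiv.ofSet (st σ)) (PartialEquiv.ofSet (st τ))

lemma rel_refl (hr : IsCongruence r) (hn : 1 ≤ n) {σ : E → ℝ} (hσ : Nice σ) : REL r σ σ :=
  hr.1 _ (ofSet_SPH (st_isStar hn hσ))

lemma rel_symm (hr : IsCongruence r) (hn : 1 ≤ n) {σ τ : E → ℝ} (hσ : Nice σ) (hτ : Nice τ)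
    (h : REL r σ τ) : REL r τ σ :=
  hr.2.1 _ _ (ofSet_SPH (st_isStar hn hσ)) (ofSet_SPH (st_isStar hn hτ)) h

lemma rel_trans (hr : IsCongruence r) (hn : 1 ≤ n) {σ τ μ : E → ℝ} (hσ : Nice σ) (hτ : Nice τ)
    (hμ : Nice μ) (h1 : REL r σ τ) (h2 : REL r τ μ) : REL r σ μ :=
  hr.2.2.1 _ _ _ (ofSet_SPH (st_isStar hn hσ)) (ofSet_SPH (st_isStar hn hτ))
    (ofSet_SPH (st_isStar hn hμ)) h1 h2

lemma rel_congr {σ σ' τ τ' : E → ℝ} (h1 : ∀ u ∈ Sph, σ u = σ' u) (h2 : ∀ u ∈ Sph, τ u = τ' u)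
    (h : REL r σ τ) : REL r σ' τ' := by
  unfold REL at h ⊢
  rw [← st_congr h1, ← st_congr h2]
  exact h

lemma rel_transport (hr : IsCongruence r) (hn : 1 ≤ n) {μ σ : E → ℝ}
    (τ : EuclideanSpace ℝ (Fin n) → ℝ) (hμ : Nice μ) (hσ : Nice σ) (hτ : Nice τ)
    (hle : ∀ u ∈ Sph, μ u ≤ σ u) (h : REL r μ σ) :
    REL r (fun u => μ u * τ u / σ u) τ := by
  set ν := fun u => μ u * τ u / σ u with hν_def
  have hν : Nice ν := by
    constructor
    · exact (hμ.1.mul hτ.1).div hσ.1 (fun u hu => (hσ.2 u hu).ne')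
    · intro u hu
      exact div_pos (mul_pos (hμ.2 u hu) (hτ.2 u hu)) (hσ.2 u hu)
  have heq : Set.EqOn (rmap μ ν) (rmap σ τ) (st μ) := by
    intro x hx
    rcases eq_or_ne x 0 with rfl | hx0
    · rw [rmap_zero, rmap_zero]
    · have hu : ‖x‖⁻¹ • x ∈ Sph := dir_mem hx0
      rw [rmap_apply_ne, rmap_apply_ne]
      congr 1
      have hμu := (hμ.2 _ hu).ne'
      have hσu := (hσ.2 _ hu).ne'
      show μ (‖x‖⁻¹ • x) * τ (‖x‖⁻¹ • x) / σ (‖x‖⁻¹ • x) / μ (‖x‖⁻¹ • x)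
          = τ (‖x‖⁻¹ • x) / σ (‖x‖⁻¹ • x)
      have hexp : μ (‖x‖⁻¹ • x) * τ (‖x‖⁻¹ • x) / σ (‖x‖⁻¹ • x) / μ (‖x‖⁻¹ • x)
          = (τ (‖x‖⁻¹ • x) / σ (‖x‖⁻¹ • x)) * (μ (‖x‖⁻¹ • x) / μ (‖x‖⁻¹ • x)) := by
        ring
      rw [hexp, div_self hμu, mul_one]
  have := master hr (radialPE_SPH hn hσ hτ) (radialPE_SPH hn hμ hν)
    (st_mono hle) heq h
  exact this

lemma rel_iso (hr : IsCongruence r) (hn : 1 ≤ n) {μ σ : E → ℝ} (hμ : Nice μ) (hσ : Nice σ)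
    (hle : ∀ u ∈ Sph, μ u ≤ σ u)
    (f : (EuclideanSpace ℝ (Fin n)) ≃ₗᵢ[ℝ] (EuclideanSpace ℝ (Fin n)))
    (h : REL r μ σ) : REL r (fun y => μ (f.symm y)) (fun y => σ (f.symm y)) := by
  have heq : Set.EqOn (⇑(isoPE f μ)) (⇑(isoPE f σ)) (st μ) := fun x _ => rfl
  exact master hr (isoPE_SPH hn hσ f) (isoPE_SPH hn hμ f) (st_mono hle) heq h

lemma rel_min (hr : IsCongruence r) (hn : 1 ≤ n) {a c : E → ℝ} (b : EuclideanSpace ℝ (Fin n) → ℝ)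
    (ha : Nice a) (hb : Nice b) (hc : Nice c) (h : REL r a c) :
    REL r (fun y => min (b y) (a y)) (fun y => min (b y) (c y)) := by
  have := rel_inter hr (st_isStar hn ha) (st_isStar hn hc) (st_isStar hn hb) h
  unfold REL
  rwa [st_inter, st_inter] at this

lemma nice_one : Nice (fun _ : EuclideanSpace ℝ (Fin n) => (1:ℝ)) :=
  ⟨continuousOn_const, fun _ _ => one_pos⟩

lemma nice_min {a b : E → ℝ} (ha : Nice a) (hb : Nice b) :
    Nice (fun y => min (a y) (b y)) :=
  ⟨by simpa using ha.1.inf hb.1, fun u hu => lt_min (ha.2 u hu) (hb.2 u hu)⟩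

lemma rel_one_combine (hr : IsCongruence r) (hn : 1 ≤ n) {a b : E → ℝ}
    (ha : Nice a) (hb : Nice b) (ha1 : ∀ u ∈ Sph, a u ≤ 1)
    (hra : REL r a (fun _ => (1:ℝ))) (hrb : REL r b (fun _ => (1:ℝ))) :
    REL r (fun y => min (a y) (b y)) (fun _ => (1:ℝ)) := by
  have h1 := rel_min hr hn a hb ha nice_one hrb
  have h2 : REL r (fun y => min (a y) (b y)) a := by
    refine rel_congr (fun u _ => rfl) (fun u hu => ?_) h1
    exact min_eq_left (ha1 u hu)
  exact rel_trans hr hn (nice_min ha hb) ha nice_one h2 hra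

end Endgame


section Key

variable {r : PartialEquiv (EuclideanSpace ℝ (Fin n)) (EuclideanSpace ℝ (Fin n)) →
    PartialEquiv (EuclideanSpace ℝ (Fin n)) (EuclideanSpace ℝ (Fin n)) → Prop}

lemma key (hr : IsCongruence r) (hn : 1 ≤ n) {C A : E → ℝ} (hC : Nice C) (hA : Nice A)
    (hle : ∀ u ∈ Sph, C u ≤ A u) {u₀ : E} (hu₀ : u₀ ∈ Sph) (hlt : C u₀ < A u₀)
    (h : REL r C A) :
    ∀ σ τ : EuclideanSpace ℝ (Fin n) → ℝ, Nice σ → Nice τ → REL r σ τ := by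
  classical
  -- Step 1 : shrink to a substar of the unit ball
  set g : EuclideanSpace ℝ (Fin n) → ℝ := fun u => C u * 1 / A u with hg_def
  have hgnice : Nice g := by
    constructor
    · exact (hC.1.mul continuousOn_const).div hA.1 (fun u hu => (hA.2 u hu).ne')
    · intro u hu
      exact div_pos (mul_pos (hC.2 u hu) one_pos) (hA.2 u hu)
  have hg1 : ∀ u ∈ Sph, g u ≤ 1 := by
    intro u hu
    rw [hg_def]
    simp only [mul_one]
    exact div_le_one_of_le₀ (hle u hu) (hA.2 u hu).le
  have hglt : g u₀ < 1 := by
    rw [hg_def]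
    simp only [mul_one]
    rw [div_lt_one (hA.2 u₀ hu₀)]
    exact hlt
  have hg : REL r g (fun _ => (1:ℝ)) :=
    rel_transport hr hn (fun _ => (1:ℝ)) hC hA nice_one hle h
  -- Step 2 : rotations
  have hex : ∀ v : EuclideanSpace ℝ (Fin n),
      ∃ f : (EuclideanSpace ℝ (Fin n)) ≃ₗᵢ[ℝ] (EuclideanSpace ℝ (Fin n)),
        v ∈ Sph → f u₀ = v := by
    intro v
    by_cases hv : v ∈ Sph
    · refine ⟨Submodule.reflection (ℝ ∙ (u₀ - v))ᗮ, fun _ => Submodule.reflection_sub ?_⟩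
      have h1 : ‖u₀‖ = 1 := by simpa using hu₀
      have h2 : ‖v‖ = 1 := by simpa using hv
      rw [h1, h2]
    · exact ⟨LinearIsometryEquiv.refl ℝ _, fun hv' => absurd hv' hv⟩
  choose F hF using hex
  have hgv_nice : ∀ v : EuclideanSpace ℝ (Fin n), Nice (fun y => g ((F v).symm y)) :=
    fun v => nice_iso hgnice (F v)
  have hsymm_sph : ∀ (v : EuclideanSpace ℝ (Fin n)), ∀ y ∈ Sph, (F v).symm y ∈ Sph := by
    intro v y hy
    have : ‖(F v).symm y‖ = ‖y‖ := (F v).symm.norm_map y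
    simp only [mem_sphere_iff_norm, sub_zero] at hy ⊢
    rw [this, hy]
  have hgv_le1 : ∀ v : EuclideanSpace ℝ (Fin n), ∀ y ∈ Sph, g ((F v).symm y) ≤ 1 :=
    fun v y hy => hg1 _ (hsymm_sph v y hy)
  have hgv_rel : ∀ v : EuclideanSpace ℝ (Fin n), REL r (fun y => g ((F v).symm y)) (fun _ => (1:ℝ)) :=
    fun v => rel_iso hr hn hgnice nice_one hg1 (F v) hg
  -- Step 3 : cover
  have hUex : ∀ v : EuclideanSpace ℝ (Fin n), ∃ U : Set (EuclideanSpace ℝ (Fin n)),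
      IsOpen U ∧ (∀ y ∈ U ∩ Sph, g ((F v).symm y) < 1) ∧ (v ∈ Sph → v ∈ U) := by
    intro v
    by_cases hv : v ∈ Sph
    · have hval : g ((F v).symm v) < 1 := by
        have : (F v).symm v = u₀ := by
          apply (F v).injective
          rw [(F v).apply_symm_apply, hF v hv]
        rw [this]
        exact hglt
      have hcont := (hgv_nice v).1 v hv
      have hev : (fun y => g ((F v).symm y)) ⁻¹' Set.Iio 1 ∈ nhdsWithin v Sph :=
        hcont (Iio_mem_nhds hval)
      rw [mem_nhdsWithin] at hev
      obtain ⟨U, hUo, hvU, hsub⟩ := hev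
      exact ⟨U, hUo, fun y hy => hsub ⟨hy.1, hy.2⟩, fun _ => hvU⟩
    · exact ⟨∅, isOpen_empty, by simp, fun h' => absurd h' hv⟩
  choose U hUo hUlt hUmem using hUex
  have hcover : Sph ⊆ ⋃ v, U v := fun v hv => Set.mem_iUnion.2 ⟨v, hUmem v hv⟩
  obtain ⟨t, ht⟩ := sph_compact.elim_finite_subcover U hUo hcover
  obtain ⟨w₀, hw₀⟩ := sph_nonempty hn
  obtain ⟨i₀, hi₀, _⟩ := Set.mem_iUnion₂.1 (ht hw₀)
  have tne : t.Nonempty := ⟨i₀, hi₀⟩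
  -- Step 4 : finite intersection
  have main : ∀ (s : Finset (EuclideanSpace ℝ (Fin n))) (hs : s.Nonempty),
      Nice (fun y => s.inf' hs (fun i => g ((F i).symm y))) ∧
      (∀ y ∈ Sph, s.inf' hs (fun i => g ((F i).symm y)) ≤ 1) ∧
      REL r (fun y => s.inf' hs (fun i => g ((F i).symm y))) (fun _ => (1:ℝ)) := by
    intro s hs
    induction hs using Finset.Nonempty.cons_induction with
    | singleton a =>
      have hfun : (fun y => ({a} : Finset (EuclideanSpace ℝ (Fin n))).inf'
          (Finset.singleton_nonempty a) (fun i => g ((F i).symm y)))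
          = fun y => g ((F a).symm y) := by
        funext y
        simp [Finset.inf'_singleton]
      rw [hfun]
      exact ⟨hgv_nice a, hgv_le1 a, hgv_rel a⟩
    | cons a s' ha hs' IH =>
      obtain ⟨IH1, IH2, IH3⟩ := IH
      have hfun : (fun y => (Finset.cons a s' ha).inf' (Finset.cons_nonempty ha)
          (fun i => g ((F i).symm y)))
          = fun y => min (g ((F a).symm y)) (s'.inf' hs' (fun i => g ((F i).symm y))) := by
        funext y
        rw [Finset.inf'_cons (H := hs')]
      rw [hfun]
      refine ⟨nice_min (hgv_nice a) IH1, ?_, ?_⟩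
      · intro y hy
        rw [Finset.inf'_cons (H := hs')]
        exact le_trans inf_le_left (hgv_le1 a y hy)
      · exact rel_one_combine hr hn (hgv_nice a) IH1 (hgv_le1 a) (hgv_rel a) IH3
  obtain ⟨hqnice, hq1, hqrel⟩ := main t tne
  set q : EuclideanSpace ℝ (Fin n) → ℝ := fun y => t.inf' tne (fun i => g ((F i).symm y)) with hq_def
  have hqlt : ∀ y ∈ Sph, q y < 1 := by
    intro y hy
    obtain ⟨i, hit, hyU⟩ := Set.mem_iUnion₂.1 (ht hy)
    calc q y ≤ g ((F i).symm y) := Finset.inf'_le _ hit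
      _ < 1 := hUlt i y ⟨hyU, hy⟩
  -- Step 5 : the constant
  obtain ⟨v₀, hv₀, hmax⟩ := sph_compact.exists_isMaxOn (sph_nonempty hn) hqnice.1
  set s₀ : ℝ := q v₀ with hs₀_def
  have hs₀pos : 0 < s₀ := hqnice.2 v₀ hv₀
  have hs₀lt : s₀ < 1 := hqlt v₀ hv₀
  have hcst : Nice (fun _ : EuclideanSpace ℝ (Fin n) => s₀) :=
    ⟨continuousOn_const, fun _ _ => hs₀pos⟩
  have hrel_qcst : REL r q (fun _ => s₀) := by
    have h1 := rel_min hr hn (fun _ => s₀) hqnice hcst nice_one hqrel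
    refine rel_congr (fun u hu => ?_) (fun u hu => ?_) h1
    · exact min_eq_right (hmax hu)
    · exact min_eq_left hs₀lt.le
  have hrel_cst_one : REL r (fun _ : EuclideanSpace ℝ (Fin n) => s₀) (fun _ => (1:ℝ)) :=
    rel_trans hr hn hcst hqnice nice_one (rel_symm hr hn hqnice hcst hrel_qcst) hqrel
  -- Step 6 : powers
  have hpow : ∀ (k : ℕ) (τ' : EuclideanSpace ℝ (Fin n) → ℝ), Nice τ' →
      REL r (fun y => s₀ ^ k * τ' y) τ' := by
    intro k
    induction k with
    | zero =>
      intro τ' hτ'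
      refine rel_congr (fun u _ => ?_) (fun _ _ => rfl) (rel_refl hr hn hτ')
      simp
    | succ k IH =>
      intro τ' hτ'
      have hsτ : Nice (fun y => s₀ * τ' y) :=
        ⟨continuousOn_const.mul hτ'.1, fun u hu => mul_pos hs₀pos (hτ'.2 u hu)⟩
      have h1 : REL r (fun y => s₀ * τ' y) τ' := by
        have h2 := rel_transport hr hn τ' hcst nice_one hτ'
          (fun u _ => hs₀lt.le) hrel_cst_one
        refine rel_congr (fun u _ => ?_) (fun _ _ => rfl) h2
        rw [div_one]
      have h3 := IH (fun y => s₀ * τ' y) hsτ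
      have h4 : REL r (fun y => s₀ ^ (k+1) * τ' y) (fun y => s₀ * τ' y) := by
        refine rel_congr (fun u _ => ?_) (fun _ _ => rfl) h3
        ring
      have h5 : Nice (fun y => s₀ ^ (k+1) * τ' y) :=
        ⟨continuousOn_const.mul hτ'.1, fun u hu => mul_pos (pow_pos hs₀pos _) (hτ'.2 u hu)⟩
      exact rel_trans hr hn h5 hsτ hτ' h4 h1
  -- Step 7 : conclusion
  have claim : ∀ (m σ' : EuclideanSpace ℝ (Fin n) → ℝ), Nice m → Nice σ' →
      (∀ u ∈ Sph, m u ≤ σ' u) → REL r σ' m := by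
    intro m σ' hm hσ' hmle
    obtain ⟨ε, hε, hεm⟩ := hm.exists_min hn
    obtain ⟨R, hR, hσR⟩ := hσ'.exists_max hn
    obtain ⟨k, hk⟩ := exists_pow_lt_of_lt_one (div_pos hε hR) hs₀lt
    have hsk : (0:ℝ) < s₀ ^ k := pow_pos hs₀pos _
    have hle2 : ∀ u ∈ Sph, s₀ ^ k * σ' u ≤ m u := by
      intro u hu
      have h6 : s₀ ^ k * R < ε := (lt_div_iff₀ hR).1 hk
      have h7 : s₀ ^ k * σ' u ≤ s₀ ^ k * R := by
        apply mul_le_mul_of_nonneg_left (hσR u hu) hsk.le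
      linarith [hεm u hu]
    have hskσ : Nice (fun y => s₀ ^ k * σ' y) :=
      ⟨continuousOn_const.mul hσ'.1, fun u hu => mul_pos hsk (hσ'.2 u hu)⟩
    have h1 := hpow k σ' hσ'
    have h2 := rel_min hr hn m hskσ hm hσ' h1
    have h3 : REL r (fun y => s₀ ^ k * σ' y) m := by
      refine rel_congr (fun u hu => ?_) (fun u hu => ?_) h2
      · exact min_eq_right (hle2 u hu)
      · exact min_eq_left (hmle u hu)
    exact rel_trans hr hn hσ' hskσ hm (rel_symm hr hn hskσ hσ' h1) h3
  intro σ τ hσ hτ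
  have hm : Nice (fun y => min (σ y) (τ y)) := nice_min hσ hτ
  have hσm := claim _ σ hm hσ (fun u _ => min_le_left _ _)
  have hτm := claim _ τ hm hτ (fun u _ => min_le_right _ _)
  exact rel_trans hr hn hσ hm hτ hσm (rel_symm hr hn hτ hm hτm)

end Key

end Star16

theorem stmt_16 (n : ℕ) (hn : 1 ≤ n)
    (r : PartialEquiv (EuclideanSpace ℝ (Fin n)) (EuclideanSpace ℝ (Fin n)) →
         PartialEquiv (EuclideanSpace ℝ (Fin n)) (EuclideanSpace ℝ (Fin n)) → Prop)
    (hr : IsCongruence r) (L₁ L₂ : Set (EuclideanSpace ℝ (Fin n)))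
    (h₁ : IsStar L₁) (h₂ : IsStar L₂) (hne : L₁ ≠ L₂)
    (h : r (PartialEquiv.ofSet L₁) (PartialEquiv.ofSet L₂)) :
    ∀ L L' : Set (EuclideanSpace ℝ (Fin n)), IsStar L → IsStar L' →
      r (PartialEquiv.ofSet L) (PartialEquiv.ofSet L') := by
  intro L L' hL hL'
  open Star16 in
  have key0 : ∀ σ τ : EuclideanSpace ℝ (Fin n) → ℝ, Nice σ → Nice τ → REL r σ τ := by
    set ρ₁ := radial L₁ with hρ₁
    set ρ₂ := radial L₂ with hρ₂
    have n1 : Nice ρ₁ := isStar_nice h₁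
    have n2 : Nice ρ₂ := isStar_nice h₂
    set m : EuclideanSpace ℝ (Fin n) → ℝ := fun y => min (ρ₁ y) (ρ₂ y) with hm_def
    have nm : Nice m := nice_min n1 n2
    have hCset : L₁ ∩ L₂ = st m := by
      rw [isStar_eq_st h₁, isStar_eq_st h₂, st_inter]
    have hCstar : IsStar (L₁ ∩ L₂) := by
      rw [hCset]
      exact st_isStar hn nm
    -- two base relations
    have h1 : r (PartialEquiv.ofSet L₁) (PartialEquiv.ofSet (L₁ ∩ L₂)) := by
      have h1' := rel_inter hr h₁ h₂ h₁ h
      rwa [Set.inter_self] at h1'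
    have h2 : r (PartialEquiv.ofSet (L₁ ∩ L₂)) (PartialEquiv.ofSet L₂) := by
      have h2' := rel_inter hr h₁ h₂ h₂ h
      rwa [Set.inter_self, Set.inter_comm L₂ L₁] at h2'
    -- pick the side where the intersection is proper
    have hmain : ∃ A : Set (EuclideanSpace ℝ (Fin n)), IsStar A ∧ L₁ ∩ L₂ ≠ A ∧
        (∀ u ∈ Metric.sphere (0 : EuclideanSpace ℝ (Fin n)) 1, m u ≤ radial A u) ∧
        r (PartialEquiv.ofSet (L₁ ∩ L₂)) (PartialEquiv.ofSet A) := by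
      by_cases hc : L₁ ∩ L₂ = L₁
      · refine ⟨L₂, h₂, ?_, ?_, h2⟩
        · exact fun heq => hne (hc.symm.trans heq)
        · intro u _
          exact min_le_right _ _
      · refine ⟨L₁, h₁, hc, ?_, ?_⟩
        · intro u _
          exact min_le_left _ _
        · exact hr.2.1 _ _ (ofSet_SPH h₁) (ofSet_SPH hCstar) h1
    obtain ⟨A, hA, hneA, hleA, hrelA⟩ := hmain
    have nA : Nice (radial A) := isStar_nice hA
    have hrel : REL r m (radial A) := by
      show r (PartialEquiv.ofSet (st m)) (PartialEquiv.ofSet (st (radial A)))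
      rw [← hCset, ← isStar_eq_st hA]
      exact hrelA
    have hstrict : ∃ u₀ ∈ Metric.sphere (0 : EuclideanSpace ℝ (Fin n)) 1,
        m u₀ < radial A u₀ := by
      by_contra hcon
      push_neg at hcon
      apply hneA
      rw [hCset, isStar_eq_st hA]
      exact st_congr (fun u hu => le_antisymm (hleA u hu) (hcon u hu))
    obtain ⟨u₀, hu₀, hlt⟩ := hstrict
    exact key hr hn nm nA hleA hu₀ hlt hrel
  have := key0 (radial L) (radial L') (isStar_nice hL) (isStar_nice hL')
  unfold Star16.REL at this
  rwa [← isStar_eq_st hL, ← isStar_eq_st hL'] at this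
end

section
/- Let n ≥ 1, let E = EuclideanSpace ℝ (Fin n), and let r be a congruence on the star partial homeomorphisms of E which is not the identity congruence, i.e. there exist star partial homeomorphisms α and β with r α β and ¬(α ≈ β). Then r identifies all idempotents: for all stars L₁ and L₂ in E, r (PartialEquiv.ofSet L₁) (PartialEquiv.ofSet L₂). (Since a congruence on an inverse semigroup identifying all idempotents is a group congruence, every non-unit congruence on the semigroup of star partial homeomorphisms is a group congruence.) -/
/-!
Every star `L` is the star `starSet ρ` of its radial function `ρ = radial L`, a positive
continuous function on the unit sphere, so idempotents `ofSet L` can be handled through their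
radial functions.

A congruence identifying two different star partial homeomorphisms `α`, `β` identifies two
nested idempotents `ofSet A`, `ofSet B` with `A ⊊ B`. Indeed, composing with `β⁻¹` and cutting
down to `L = β.source` gives `r σ (ofSet L)` with `σ.source ⊆ L`; unless `σ` is the identity of
`L` (which makes `α` extend `β`), either `σ.source ⊊ L`, or `σ` moves a point `x`, and cutting `σ`
down on both sides by a star containing just one of `x`, `σ x` yields a proper substar again.

Conjugation by the ray-wise rescalings `x ↦ k (x / ‖x‖) • x` multiplies radial functions by `k`,
conjugation by rotations rotates them, and multiplication by an idempotent takes minima. With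
`a ≤ b` the radial functions of `A ⊊ B` this relates `a / b` to `1`, then a minimum of finitely
many rotations of `a / b`, bounded by some `θ < 1`, to `1`, hence the constants `θ` and `1`, and
thus `θ ^ k` and `1` for every `k`. Taking minima with constants, every radial function is then
related to a constant, and any two constants are related.
-/

open Set Metric PartialEquiv Filter Topology

local notation "𝔼" n:max => EuclideanSpace ℝ (Fin n)

theorem segment_zero_eq_image {E : Type*} [AddCommGroup E] [Module ℝ E] (x : E) :
    segment ℝ 0 x = (· • x) '' Icc (0 : ℝ) 1 := by
  rw [segment_eq_image]
  simp

theorem image_segment_zero_of_smul {E F : Type*} [AddCommGroup E] [Module ℝ E]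
    [AddCommGroup F] [Module ℝ F] {f : E → F} (hf : ∀ (t : ℝ) x, 0 ≤ t → f (t • x) = t • f x)
    (x : E) : f '' segment ℝ 0 x = segment ℝ 0 (f x) := by
  rw [segment_zero_eq_image, segment_zero_eq_image, image_image]
  exact image_congr fun t ht => hf t x ht.1

namespace StarBody

variable {n : ℕ}

noncomputable def dir (x : 𝔼 n) : 𝔼 n := ‖x‖⁻¹ • x

theorem dir_mem_sphere {x : 𝔼 n} (hx : x ≠ 0) : dir x ∈ sphere (0 : 𝔼 n) 1 := by
  rw [mem_sphere_zero_iff_norm, dir, norm_smul, norm_inv, norm_norm,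
    inv_mul_cancel₀ (norm_ne_zero_iff.2 hx)]

theorem norm_smul_dir (x : 𝔼 n) : ‖x‖ • dir x = x := by
  rcases eq_or_ne x 0 with rfl | hx
  · simp
  · rw [dir, smul_smul, mul_inv_cancel₀ (norm_ne_zero_iff.2 hx), one_smul]

theorem dir_smul (x : 𝔼 n) {c : ℝ} (hc : 0 < c) : dir (c • x) = dir x := by
  rw [dir, dir, norm_smul, Real.norm_of_nonneg hc.le, smul_smul, mul_inv, mul_right_comm,
    inv_mul_cancel₀ hc.ne', one_mul]

theorem dir_map (T : 𝔼 n ≃ₗᵢ[ℝ] 𝔼 n) (x : 𝔼 n) : dir (T x) = T (dir x) := by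
  rw [dir, dir, T.norm_map, map_smul]

theorem continuousOn_comp_dir {f : 𝔼 n → ℝ} (hf : ContinuousOn f (sphere (0 : 𝔼 n) 1)) :
    ContinuousOn (fun x => f (dir x)) {x | x ≠ 0} :=
  hf.comp ((continuousOn_id.norm.inv₀ fun _ hx => norm_ne_zero_iff.2 hx).smul continuousOn_id)
    fun _ hx => dir_mem_sphere hx

def starSet (f : 𝔼 n → ℝ) : Set (𝔼 n) := {x | x = 0 ∨ ‖x‖ ≤ f (dir x)}

structure IsRadialFun (f : 𝔼 n → ℝ) : Prop where
  continuousOn : ContinuousOn f (sphere 0 1)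
  pos : ∀ u ∈ sphere (0 : 𝔼 n) 1, 0 < f u

theorem zero_mem_starSet (f : 𝔼 n → ℝ) : (0 : 𝔼 n) ∈ starSet f := Or.inl rfl

theorem mem_starSet_of_ne_zero {f : 𝔼 n → ℝ} {x : 𝔼 n} (hx : x ≠ 0) :
    x ∈ starSet f ↔ ‖x‖ ≤ f (dir x) :=
  or_iff_right hx

theorem starSet_congr {f g : 𝔼 n → ℝ} (h : ∀ u ∈ sphere (0 : 𝔼 n) 1, f u = g u) :
    starSet f = starSet g := by
  ext x
  rcases eq_or_ne x 0 with rfl | hx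
  · exact iff_of_true (zero_mem_starSet f) (zero_mem_starSet g)
  · rw [mem_starSet_of_ne_zero hx, mem_starSet_of_ne_zero hx, h _ (dir_mem_sphere hx)]

theorem starSet_inter (f g : 𝔼 n → ℝ) :
    starSet f ∩ starSet g = starSet fun u => min (f u) (g u) := by
  ext x
  rcases eq_or_ne x 0 with rfl | hx
  · simp [zero_mem_starSet]
  · simp only [mem_inter_iff, mem_starSet_of_ne_zero hx, le_min_iff]

theorem smul_mem_starSet {f : 𝔼 n → ℝ} {x : 𝔼 n} (hx : x ∈ starSet f) {t : ℝ} (ht₀ : 0 ≤ t)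
    (ht₁ : t ≤ 1) : t • x ∈ starSet f := by
  rcases eq_or_ne (t • x) 0 with h | htx
  · exact h ▸ zero_mem_starSet f
  obtain ⟨ht, hx0⟩ := smul_ne_zero_iff.1 htx
  rw [mem_starSet_of_ne_zero hx0] at hx
  rw [mem_starSet_of_ne_zero htx, dir_smul x (ht₀.lt_of_ne' ht), norm_smul,
    Real.norm_of_nonneg ht₀]
  exact (mul_le_of_le_one_left (norm_nonneg x) ht₁).trans hx

theorem isOpen_setOf_norm_lt {f : 𝔼 n → ℝ} (hf : ContinuousOn f (sphere (0 : 𝔼 n) 1)) :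
    IsOpen {y : 𝔼 n | y ≠ 0 ∧ ‖y‖ < f (dir y)} := by
  convert ((continuousOn_comp_dir hf).sub continuous_norm.continuousOn).isOpen_inter_preimage
    isOpen_ne (isOpen_Ioi (a := 0)) using 1
  ext y
  simp [sub_pos]

theorem smul_mem_interior_starSet {f : 𝔼 n → ℝ} (hf : ContinuousOn f (sphere (0 : 𝔼 n) 1))
    (h0 : (0 : 𝔼 n) ∈ interior (starSet f)) {x : 𝔼 n} (hx : x ∈ starSet f) {t : ℝ}
    (ht₀ : 0 ≤ t) (ht₁ : t < 1) : t • x ∈ interior (starSet f) := by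
  rcases eq_or_ne (t • x) 0 with h | htx
  · rwa [h]
  obtain ⟨ht, hx0⟩ := smul_ne_zero_iff.1 htx
  refine interior_maximal (fun y hy => (mem_starSet_of_ne_zero hy.1).2 hy.2.le)
    (isOpen_setOf_norm_lt hf) ⟨htx, ?_⟩
  rw [dir_smul x (ht₀.lt_of_ne' ht), norm_smul, Real.norm_of_nonneg ht₀]
  exact (mul_lt_of_lt_one_left (norm_pos_iff.2 hx0) ht₁).trans_le
    ((mem_starSet_of_ne_zero hx0).1 hx)

theorem isClosed_starSet {f : 𝔼 n → ℝ} (hf : ContinuousOn f (sphere (0 : 𝔼 n) 1)) :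
    IsClosed (starSet f) := by
  rw [← isOpen_compl_iff]
  convert ((continuousOn_comp_dir hf).sub continuous_norm.continuousOn).isOpen_inter_preimage
    isOpen_ne (isOpen_Iio (a := 0)) using 1
  ext y
  simp [starSet, sub_neg]

section Radial

variable {L : Set (𝔼 n)} {u : 𝔼 n}

theorem bddAbove_radial (hL : Bornology.IsBounded L)
    (hu : u ∈ sphere (0 : 𝔼 n) 1) : BddAbove {c : ℝ | 0 ≤ c ∧ c • u ∈ L} := by
  obtain ⟨R, hR⟩ := hL.subset_closedBall 0
  refine ⟨R, fun c ⟨hc, hcu⟩ => ?_⟩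
  simpa [norm_smul, abs_of_nonneg hc, mem_sphere_zero_iff_norm.1 hu] using hR hcu

theorem le_radial (hL : Bornology.IsBounded L) (hu : u ∈ sphere (0 : 𝔼 n) 1) {c : ℝ}
    (hc : 0 ≤ c) (hcu : c • u ∈ L) : c ≤ radial L u :=
  le_csSup (bddAbove_radial hL hu) ⟨hc, hcu⟩

theorem radial_pos (hL : Bornology.IsBounded L) (h0 : (0 : 𝔼 n) ∈ interior L)
    (hu : u ∈ sphere (0 : 𝔼 n) 1) : 0 < radial L u := by
  obtain ⟨ε, hε, hball⟩ := Metric.isOpen_iff.1 isOpen_interior 0 h0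
  have hmem : (ε / 2) • u ∈ L := interior_subset <| hball <| by
    simp [norm_smul, abs_of_pos hε, mem_sphere_zero_iff_norm.1 hu, hε]
  exact (half_pos hε).trans_le (le_radial hL hu (half_pos hε).le hmem)

theorem radial_smul_mem (hL : IsCompact L) (h0 : (0 : 𝔼 n) ∈ L)
    (hu : u ∈ sphere (0 : 𝔼 n) 1) : radial L u • u ∈ L :=
  (IsClosed.csSup_mem (isClosed_Ici.inter (hL.isClosed.preimage (continuous_id.smul
    continuous_const))) ⟨0, le_rfl, by simpa using h0⟩ (bddAbove_radial hL.isBounded hu)).2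

theorem smul_mem_of_le_radial (hL : IsCompact L) (h0 : (0 : 𝔼 n) ∈ interior L)
    (hS : StarConvex ℝ 0 L) (hu : u ∈ sphere (0 : 𝔼 n) 1) {c : ℝ} (hc : 0 ≤ c)
    (hcr : c ≤ radial L u) : c • u ∈ L := by
  have hρ := radial_pos hL.isBounded h0 hu
  rw [← div_mul_cancel₀ c hρ.ne', ← smul_smul]
  exact hS.smul_mem (radial_smul_mem hL (interior_subset h0) hu) (div_nonneg hc hρ.le)
    ((div_le_one hρ).2 hcr)

theorem eq_starSet_radial (hL : IsCompact L) (h0 : (0 : 𝔼 n) ∈ interior L)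
    (hS : StarConvex ℝ 0 L) : L = starSet (radial L) := by
  ext x
  rcases eq_or_ne x 0 with rfl | hx
  · exact iff_of_true (interior_subset h0) (zero_mem_starSet _)
  rw [mem_starSet_of_ne_zero hx]
  constructor
  · intro hxL
    exact le_radial hL.isBounded (dir_mem_sphere hx) (norm_nonneg x) (by rwa [norm_smul_dir])
  · intro hle
    simpa only [norm_smul_dir] using
      smul_mem_of_le_radial hL h0 hS (dir_mem_sphere hx) (norm_nonneg x) hle

theorem upperSemicontinuousOn_radial (hL : IsCompact L) (h0 : (0 : 𝔼 n) ∈ interior L)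
    (hS : StarConvex ℝ 0 L) : UpperSemicontinuousOn (radial L) (sphere (0 : 𝔼 n) 1) := by
  refine upperSemicontinuousOn_iff_preimage_Iio.2 fun c => ?_
  rcases le_or_gt c 0 with hc | hc
  · refine ⟨∅, isOpen_empty, ?_⟩
    ext u
    simpa using fun hu => hc.trans (radial_pos hL.isBounded h0 hu).le
  -- for `c > 0` on the sphere, `radial L u < c ↔ c • u ∉ L`
  refine ⟨(c • ·) ⁻¹' Lᶜ, hL.isClosed.isOpen_compl.preimage (continuous_const_smul c), ?_⟩
  ext u
  simp only [mem_inter_iff, mem_preimage, mem_Iio, mem_compl_iff, and_congr_right_iff]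
  intro hu
  rw [← not_le, not_iff_not]
  exact ⟨smul_mem_of_le_radial hL h0 hS hu hc.le, le_radial hL.isBounded hu hc.le⟩

theorem lowerSemicontinuousOn_radial (hL : IsCompact L) (h0 : (0 : 𝔼 n) ∈ interior L)
    (hint : ∀ x ∈ L, ∀ t : ℝ, 0 ≤ t → t < 1 → t • x ∈ interior L) :
    LowerSemicontinuousOn (radial L) (sphere (0 : 𝔼 n) 1) := by
  refine lowerSemicontinuousOn_iff_preimage_Ioi.2 fun c => ?_
  rcases lt_or_ge c 0 with hc | hc
  · refine ⟨univ, isOpen_univ, ?_⟩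
    ext u
    simpa using fun hu => hc.trans (radial_pos hL.isBounded h0 hu)
  -- for `c ≥ 0` on the sphere, `c < radial L u ↔ c • u ∈ interior L`
  refine ⟨(c • ·) ⁻¹' interior L, isOpen_interior.preimage (continuous_const_smul c), ?_⟩
  ext u
  simp only [mem_inter_iff, mem_preimage, mem_Ioi, and_congr_right_iff]
  intro hu
  have hρ := radial_pos hL.isBounded h0 hu
  constructor
  · intro hcu
    have := hint _ (radial_smul_mem hL (interior_subset h0) hu) (c / radial L u)
      (div_nonneg hc hρ.le) ((div_lt_one hρ).2 hcu)
    rwa [smul_smul, div_mul_cancel₀ _ hρ.ne'] at this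
  · intro hcu
    obtain ⟨ε, hε, hball⟩ := Metric.isOpen_iff.1
      (isOpen_interior.preimage (continuous_id.smul continuous_const) :
        IsOpen {s : ℝ | s • u ∈ interior L}) c hcu
    have hmem : (c + ε / 2) • u ∈ L := interior_subset <| hball <| by
      rw [Real.ball_eq_Ioo]; constructor <;> linarith
    linarith [le_radial hL.isBounded hu (by linarith) hmem]

end Radial

theorem isStar_iff {L : Set (𝔼 n)} :
    IsStar L ↔ IsCompact L ∧ (0 : 𝔼 n) ∈ interior L ∧ (∀ x ∈ L, segment ℝ 0 x ⊆ L) ∧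
      ∀ x ∈ L, ∀ t : ℝ, 0 ≤ t → t < 1 → t • x ∈ interior L := by
  refine and_congr_right fun hL => and_congr_right fun h0 => and_congr_right fun hS => ?_
  have hS' : StarConvex ℝ 0 L := starConvex_iff_segment_subset.2 fun x hx => hS x hx
  refine ⟨fun hρ x hx t ht₀ ht₁ => ?_, fun hint => continuousOn_iff_lower_upperSemicontinuousOn.2
    ⟨lowerSemicontinuousOn_radial hL h0 hint, upperSemicontinuousOn_radial hL h0 hS'⟩⟩
  have hLρ := eq_starSet_radial hL h0 hS'
  rw [hLρ] at h0 hx ⊢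
  exact smul_mem_interior_starSet hρ h0 hx ht₀ ht₁

theorem isStar_starSet {f : 𝔼 n → ℝ} (hf : IsRadialFun f) : IsStar (starSet f) := by
  obtain ⟨m, hm, hmf⟩ := (isCompact_sphere (0 : 𝔼 n) 1).exists_forall_le' hf.continuousOn hf.pos
  obtain ⟨M, hM⟩ := (isCompact_sphere (0 : 𝔼 n) 1).bddAbove_image hf.continuousOn
  have hle : ∀ x ∈ starSet f, ‖x‖ ≤ max M 0 := fun x hx => by
    rcases eq_or_ne x 0 with rfl | hx0
    · simp
    · exact le_max_of_le_left (((mem_starSet_of_ne_zero hx0).1 hx).trans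
        (hM ⟨_, dir_mem_sphere hx0, rfl⟩))
  have hball : ball (0 : 𝔼 n) m ⊆ starSet f := fun x hx => by
    rcases eq_or_ne x 0 with rfl | hx0
    · exact zero_mem_starSet f
    · exact (mem_starSet_of_ne_zero hx0).2
        ((mem_ball_zero_iff.1 hx).le.trans (hmf _ (dir_mem_sphere hx0)))
  have h0 : (0 : 𝔼 n) ∈ interior (starSet f) :=
    interior_mono hball (by simpa [isOpen_ball.interior_eq] using hm)
  refine isStar_iff.2 ⟨?_, h0, fun x hx => ?_,
    fun x hx t ht₀ ht₁ => smul_mem_interior_starSet hf.continuousOn h0 hx ht₀ ht₁⟩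
  · exact isCompact_of_isClosed_isBounded (isClosed_starSet hf.continuousOn)
      (isBounded_closedBall.subset fun x hx => mem_closedBall_zero_iff.2 (hle x hx))
  · rw [segment_zero_eq_image]
    rintro _ ⟨t, ⟨ht₀, ht₁⟩, rfl⟩
    exact smul_mem_starSet hx ht₀ ht₁

theorem isStar_inter {A B : Set (𝔼 n)} (hA : IsStar A) (hB : IsStar B) : IsStar (A ∩ B) := by
  obtain ⟨hA₁, hA₂, hA₃, hA₄⟩ := isStar_iff.1 hA
  obtain ⟨hB₁, hB₂, hB₃, hB₄⟩ := isStar_iff.1 hB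
  refine isStar_iff.2 ⟨hA₁.inter_right hB₁.isClosed, by rw [interior_inter]; exact ⟨hA₂, hB₂⟩,
    fun x hx => subset_inter (hA₃ x hx.1) (hB₃ x hx.2), fun x hx t ht₀ ht₁ => ?_⟩
  rw [interior_inter]
  exact ⟨hA₄ x hx.1 t ht₀ ht₁, hB₄ x hx.2 t ht₀ ht₁⟩

theorem isStar_union {A B : Set (𝔼 n)} (hA : IsStar A) (hB : IsStar B) : IsStar (A ∪ B) := by
  obtain ⟨hA₁, hA₂, hA₃, hA₄⟩ := isStar_iff.1 hA
  obtain ⟨hB₁, hB₂, hB₃, hB₄⟩ := isStar_iff.1 hB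
  refine isStar_iff.2 ⟨hA₁.union hB₁, interior_mono subset_union_left hA₂,
    fun x hx => hx.elim (fun hx => (hA₃ x hx).trans subset_union_left)
      (fun hx => (hB₃ x hx).trans subset_union_right), fun x hx t ht₀ ht₁ => ?_⟩
  exact hx.elim (fun hx => interior_mono subset_union_left (hA₄ x hx t ht₀ ht₁))
    (fun hx => interior_mono subset_union_right (hB₄ x hx t ht₀ ht₁))

theorem _root_.IsStar.zero_mem {L : Set (𝔼 n)} (hL : IsStar L) : (0 : 𝔼 n) ∈ L :=
  interior_subset hL.2.1

theorem _root_.IsStar.starConvex {L : Set (𝔼 n)} (hL : IsStar L) : StarConvex ℝ 0 L :=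
  starConvex_iff_segment_subset.2 fun x hx => hL.2.2.1 x hx

theorem _root_.IsStar.eq_starSet_radial {L : Set (𝔼 n)} (hL : IsStar L) : L = starSet (radial L) :=
  StarBody.eq_starSet_radial hL.1 hL.2.1 hL.starConvex

theorem _root_.IsStar.isRadialFun_radial {L : Set (𝔼 n)} (hL : IsStar L) : IsRadialFun (radial L) :=
  ⟨hL.2.2.2, fun _ hu => radial_pos hL.1.isBounded hL.2.1 hu⟩

theorem exists_radial_lt_of_ssubset {A B : Set (𝔼 n)} (hA : IsStar A) (hB : IsStar B)
    (hAB : A ⊂ B) : (∀ u ∈ sphere (0 : 𝔼 n) 1, radial A u ≤ radial B u) ∧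
      ∃ u ∈ sphere (0 : 𝔼 n) 1, radial A u < radial B u := by
  refine ⟨fun u hu => csSup_le_csSup (bddAbove_radial hB.1.isBounded hu)
    ⟨0, le_rfl, by simpa using hA.zero_mem⟩ fun c hc => ⟨hc.1, hAB.subset hc.2⟩, ?_⟩
  obtain ⟨x, hxB, hxA⟩ := exists_of_ssubset hAB
  have hx : x ≠ 0 := by rintro rfl; exact hxA hA.zero_mem
  rw [hA.eq_starSet_radial, mem_starSet_of_ne_zero hx, not_le] at hxA
  rw [hB.eq_starSet_radial, mem_starSet_of_ne_zero hx] at hxB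
  exact ⟨dir x, dir_mem_sphere hx, hxA.trans_le hxB⟩

theorem exists_isStar_mem_not_mem {p q : 𝔼 n} (hp : p ≠ 0) (hpq : p ≠ q) (hle : ‖p‖ ≤ ‖q‖) :
    ∃ K, IsStar K ∧ p ∈ K ∧ q ∉ K := by
  have hp' : 0 < ‖p‖ := norm_pos_iff.2 hp
  have hq : q ≠ 0 := norm_pos_iff.1 (hp'.trans_le hle)
  set f : 𝔼 n → ℝ := fun u => ‖p‖ - min (‖p‖ / 2) (dist u (dir p))
  have hf : IsRadialFun f :=
    ⟨(by fun_prop : Continuous f).continuousOn,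
      fun u _ => by linarith [min_le_left (‖p‖ / 2) (dist u (dir p))]⟩
  refine ⟨starSet f, isStar_starSet hf, (mem_starSet_of_ne_zero hp).2 (by simp [f]), ?_⟩
  rw [mem_starSet_of_ne_zero hq, not_le]
  rcases eq_or_ne (dir q) (dir p) with hdir | hdir
  · have hnorm : ‖p‖ ≠ ‖q‖ := fun h => hpq <| by
      rw [← norm_smul_dir p, ← norm_smul_dir q, h, hdir]
    simp only [f, hdir, dist_self, min_eq_right (half_pos hp').le, sub_zero]
    exact lt_of_le_of_ne hle hnorm
  · have : 0 < min (‖p‖ / 2) (dist (dir q) (dir p)) := lt_min (half_pos hp') (dist_pos.2 hdir)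
    simp only [f]
    linarith

theorem _root_.PartialEquiv.mem_interior_image {X Y : Type*} [TopologicalSpace X]
    [TopologicalSpace Y] (e : PartialEquiv X Y) (he : ContinuousOn e.symm e.target) {N : Set X}
    {z : Y} (hz : z ∈ interior e.target) (hzN : e.symm z ∈ interior N) :
    z ∈ interior (e '' N) := by
  rw [mem_interior_iff_mem_nhds] at hz hzN ⊢
  filter_upwards [hz, (he.continuousAt hz).preimage_mem_nhds hzN] with w hw hwN
  exact ⟨e.symm w, hwN, e.right_inv hw⟩

theorem isStarPartialHomeo_ofSet {L : Set (𝔼 n)} (hL : IsStar L) :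
    IsStarPartialHomeo (PartialEquiv.ofSet L) :=
  ⟨hL, hL, continuousOn_id, continuousOn_id, rfl, fun _ _ => image_id _⟩

section IsStarPartialHomeo

variable {ψ : PartialEquiv (𝔼 n) (𝔼 n)} (hψ : IsStarPartialHomeo ψ)
include hψ

theorem _root_.IsStarPartialHomeo.symm_map_zero : ψ.symm 0 = 0 := by
  conv_lhs => rw [← hψ.2.2.2.2.1]
  exact ψ.left_inv hψ.1.zero_mem

theorem _root_.IsStarPartialHomeo.symm : IsStarPartialHomeo ψ.symm := by
  have h0 := hψ.symm_map_zero
  obtain ⟨hsrc, htgt, hcont, hcont', -, hseg⟩ := hψ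
  refine ⟨htgt, hsrc, hcont', hcont, h0, fun y hy => ?_⟩
  have hx : ψ.symm y ∈ ψ.source := ψ.map_target hy
  rw [← ψ.symm_image_image_of_subset_source (hsrc.2.2.1 _ hx), hseg _ hx, ψ.right_inv hy]

theorem _root_.IsStarPartialHomeo.exists_smul_eq {x : 𝔼 n} (hx : x ∈ ψ.source) (hx0 : x ≠ 0)
    {t : ℝ} (ht₀ : 0 ≤ t) (ht₁ : t < 1) : ∃ s : ℝ, 0 ≤ s ∧ s < 1 ∧ ψ (s • x) = t • ψ x := by
  have hmem : t • ψ x ∈ segment ℝ 0 (ψ x) := by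
    rw [segment_zero_eq_image]; exact ⟨t, ⟨ht₀, ht₁.le⟩, rfl⟩
  rw [← hψ.2.2.2.2.2 x hx, segment_zero_eq_image, image_image] at hmem
  obtain ⟨s, ⟨hs₀, hs₁⟩, hs⟩ := hmem
  refine ⟨s, hs₀, hs₁.lt_of_ne ?_, hs⟩
  rintro rfl
  dsimp only at hs
  rw [one_smul] at hs
  have hψx : ψ x = 0 := by
    have h : (1 - t) • ψ x = 0 := by rw [sub_smul, one_smul, ← hs, sub_self]
    exact (smul_eq_zero.1 h).resolve_left (sub_ne_zero.2 ht₁.ne')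
  exact hx0 (ψ.injOn hx hψ.1.zero_mem (hψx.trans hψ.2.2.2.2.1.symm))

theorem _root_.IsStarPartialHomeo.isStar_image {N : Set (𝔼 n)} (hN : IsStar N)
    (hNs : N ⊆ ψ.source) : IsStar (ψ '' N) := by
  have ⟨_, htgt, hcont, hcont', h0, hseg⟩ := hψ
  obtain ⟨-, htgt₀, -, htgt_int⟩ := isStar_iff.1 htgt
  obtain ⟨hN₁, hN₀, hN₃, hN_int⟩ := isStar_iff.1 hN
  have h0' : (0 : 𝔼 n) ∈ interior (ψ '' N) :=
    ψ.mem_interior_image hcont' htgt₀ (by rwa [hψ.symm_map_zero])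
  refine isStar_iff.2 ⟨hN₁.image_of_continuousOn (hcont.mono hNs), h0', ?_, ?_⟩
  · rintro _ ⟨x, hx, rfl⟩
    rw [← hseg x (hNs hx)]
    exact image_mono (hN₃ x hx)
  · rintro _ ⟨x, hx, rfl⟩ t ht₀ ht₁
    rcases eq_or_ne x 0 with rfl | hx0
    · rwa [h0, smul_zero]
    obtain ⟨s, hs₀, hs₁, hs⟩ := hψ.exists_smul_eq (hNs hx) hx0 ht₀ ht₁
    refine ψ.mem_interior_image hcont' (htgt_int _ (ψ.map_source (hNs hx)) t ht₀ ht₁) ?_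
    rw [← hs, ψ.left_inv (hNs (hN.starConvex.smul_mem hx hs₀ hs₁.le))]
    exact hN_int x hx s hs₀ hs₁

end IsStarPartialHomeo

theorem _root_.IsStarPartialHomeo.trans {α β : PartialEquiv (𝔼 n) (𝔼 n)}
    (hα : IsStarPartialHomeo α) (hβ : IsStarPartialHomeo β) : IsStarPartialHomeo (α.trans β) := by
  refine ⟨?_, ?_, ?_, ?_, ?_, fun x hx => ?_⟩
  · rw [trans_source'']
    exact hα.symm.isStar_image (isStar_inter hα.2.1 hβ.1) inter_subset_left
  · rw [trans_target'']
    exact hβ.isStar_image (isStar_inter hβ.1 hα.2.1) inter_subset_left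
  · exact hβ.2.2.1.comp (hα.2.2.1.mono inter_subset_left) fun x hx => hx.2
  · exact hα.2.2.2.1.comp (hβ.2.2.2.1.mono inter_subset_left) fun x hx => hx.2
  · rw [trans_apply, hα.2.2.2.2.1, hβ.2.2.2.2.1]
  · rw [trans_apply, coe_trans, image_comp, hα.2.2.2.2.2 x hx.1, hβ.2.2.2.2.2 (α x) hx.2]

theorem isStar_image_homeomorph (Φ : 𝔼 n ≃ₜ 𝔼 n) (hΦ : ∀ (t : ℝ) x, 0 ≤ t → Φ (t • x) = t • Φ x)
    {L : Set (𝔼 n)} (hL : IsStar L) : IsStar (Φ '' L) := by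
  obtain ⟨hL₁, hL₀, hL₃, hL_int⟩ := isStar_iff.1 hL
  have hΦ0 : Φ 0 = 0 := by simpa using hΦ 0 0 le_rfl
  refine isStar_iff.2 ⟨hL₁.image Φ.continuous, Φ.image_interior L ▸ ⟨0, hL₀, hΦ0⟩, ?_, ?_⟩
  · rintro _ ⟨x, hx, rfl⟩
    rw [← image_segment_zero_of_smul hΦ]
    exact image_mono (hL₃ x hx)
  · rintro _ ⟨x, hx, rfl⟩ t ht₀ ht₁
    rw [← Φ.image_interior, ← hΦ t x ht₀]
    exact mem_image_of_mem Φ (hL_int x hx t ht₀ ht₁)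

theorem isStarPartialHomeo_toPartialEquivOfImageEq (Φ : 𝔼 n ≃ₜ 𝔼 n)
    (hΦ : ∀ (t : ℝ) x, 0 ≤ t → Φ (t • x) = t • Φ x) {L : Set (𝔼 n)} (hL : IsStar L) :
    IsStarPartialHomeo (Φ.toEquiv.toPartialEquivOfImageEq L (Φ '' L) rfl) :=
  ⟨hL, isStar_image_homeomorph Φ hΦ hL, Φ.continuous.continuousOn, Φ.symm.continuous.continuousOn,
    by simpa using hΦ 0 0 le_rfl, fun x _ => image_segment_zero_of_smul hΦ x⟩

section RadialFun

variable {f g : 𝔼 n → ℝ}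

theorem isRadialFun_const {c : ℝ} (hc : 0 < c) : IsRadialFun fun _ : 𝔼 n => c :=
  ⟨continuousOn_const, fun _ _ => hc⟩

theorem IsRadialFun.mul (hf : IsRadialFun f) (hg : IsRadialFun g) :
    IsRadialFun fun u => f u * g u :=
  ⟨hf.continuousOn.mul hg.continuousOn, fun u hu => mul_pos (hf.pos u hu) (hg.pos u hu)⟩

theorem IsRadialFun.inv (hf : IsRadialFun f) : IsRadialFun fun u => (f u)⁻¹ :=
  ⟨hf.continuousOn.inv₀ fun u hu => (hf.pos u hu).ne', fun u hu => inv_pos.2 (hf.pos u hu)⟩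

theorem IsRadialFun.min (hf : IsRadialFun f) (hg : IsRadialFun g) :
    IsRadialFun fun u => min (f u) (g u) :=
  ⟨fun x hx => (hf.continuousOn x hx).min (hg.continuousOn x hx),
    fun u hu => lt_min (hf.pos u hu) (hg.pos u hu)⟩

theorem IsRadialFun.comp_linearIsometryEquiv (hf : IsRadialFun f) (T : 𝔼 n ≃ₗᵢ[ℝ] 𝔼 n) :
    IsRadialFun fun u => f (T u) := by
  have hT : MapsTo T (sphere (0 : 𝔼 n) 1) (sphere 0 1) := fun u hu => by
    rwa [mem_sphere_zero_iff_norm, T.norm_map, ← mem_sphere_zero_iff_norm]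
  exact ⟨hf.continuousOn.comp T.continuous.continuousOn hT, fun u hu => hf.pos _ (hT hu)⟩

theorem IsRadialFun.exists_const_le (hf : IsRadialFun f) :
    ∃ c, 0 < c ∧ ∀ u ∈ sphere (0 : 𝔼 n) 1, c ≤ f u :=
  (isCompact_sphere (0 : 𝔼 n) 1).exists_forall_le' hf.continuousOn hf.pos

theorem IsRadialFun.exists_le_const (hf : IsRadialFun f) :
    ∃ C, ∀ u ∈ sphere (0 : 𝔼 n) 1, f u ≤ C := by
  obtain ⟨C, hC⟩ := (isCompact_sphere (0 : 𝔼 n) 1).bddAbove_image hf.continuousOn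
  exact ⟨C, fun u hu => hC ⟨u, hu, rfl⟩⟩

end RadialFun

noncomputable def rescale (k : 𝔼 n → ℝ) (x : 𝔼 n) : 𝔼 n := k (dir x) • x

theorem rescale_smul (k : 𝔼 n → ℝ) {t : ℝ} (ht : 0 ≤ t) (x : 𝔼 n) :
    rescale k (t • x) = t • rescale k x := by
  rcases ht.eq_or_lt with rfl | ht
  · simp [rescale]
  · rw [rescale, rescale, dir_smul x ht, smul_comm]

theorem rescale_rescale_inv {k : 𝔼 n → ℝ} (hk : IsRadialFun k) (x : 𝔼 n) :
    rescale k (rescale (fun u => (k u)⁻¹) x) = x := by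
  rcases eq_or_ne x 0 with rfl | hx
  · simp [rescale]
  have hkx := hk.pos _ (dir_mem_sphere hx)
  rw [rescale, rescale, dir_smul x (inv_pos.2 hkx), smul_smul, mul_inv_cancel₀ hkx.ne', one_smul]

theorem continuous_rescale {k : 𝔼 n → ℝ} (hk : ContinuousOn k (sphere (0 : 𝔼 n) 1)) :
    Continuous (rescale k) := by
  obtain ⟨C, hC⟩ := (isCompact_sphere (0 : 𝔼 n) 1).exists_bound_of_continuousOn hk
  refine continuous_iff_continuousAt.2 fun x => ?_
  rcases eq_or_ne x 0 with rfl | hx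
  · have hle : ∀ y, ‖rescale k y‖ ≤ C * ‖y‖ := fun y => by
      rcases eq_or_ne y 0 with rfl | hy
      · simp [rescale]
      · rw [rescale, norm_smul]
        exact mul_le_mul_of_nonneg_right (hC _ (dir_mem_sphere hy)) (norm_nonneg y)
    have hlim : Tendsto (fun y : 𝔼 n => C * ‖y‖) (𝓝 0) (𝓝 0) :=
      (continuous_const.mul continuous_norm).tendsto' 0 0 (by simp)
    simpa [ContinuousAt, rescale] using squeeze_zero_norm hle hlim
  · exact ((continuousOn_comp_dir hk).smul continuousOn_id).continuousAt (isOpen_ne.mem_nhds hx)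

noncomputable def rescaleHomeomorph {k : 𝔼 n → ℝ} (hk : IsRadialFun k) : 𝔼 n ≃ₜ 𝔼 n where
  toFun := rescale k
  invFun := rescale fun u => (k u)⁻¹
  left_inv x := by simpa only [inv_inv] using rescale_rescale_inv hk.inv x
  right_inv := rescale_rescale_inv hk
  continuous_toFun := continuous_rescale hk.continuousOn
  continuous_invFun := continuous_rescale hk.inv.continuousOn

theorem rescale_mem_starSet_iff {k m : 𝔼 n → ℝ} (hk : IsRadialFun k) {x : 𝔼 n} :
    rescale k x ∈ starSet (fun u => k u * m u) ↔ x ∈ starSet m := by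
  rcases eq_or_ne x 0 with rfl | hx
  · simp [rescale, zero_mem_starSet]
  have hkx := hk.pos _ (dir_mem_sphere hx)
  rw [rescale, mem_starSet_of_ne_zero hx, mem_starSet_of_ne_zero (smul_ne_zero hkx.ne' hx),
    dir_smul x hkx, norm_smul, Real.norm_of_nonneg hkx.le, mul_le_mul_iff_right₀ hkx]

theorem rescaleHomeomorph_image_starSet {k : 𝔼 n → ℝ} (hk : IsRadialFun k) (m : 𝔼 n → ℝ) :
    rescaleHomeomorph hk '' starSet m = starSet fun u => k u * m u := by
  ext y
  refine ⟨?_, fun hy => ⟨rescale (fun u => (k u)⁻¹) y, ?_, rescale_rescale_inv hk y⟩⟩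
  · rintro ⟨x, hx, rfl⟩
    exact (rescale_mem_starSet_iff hk).2 hx
  · rw [← rescale_mem_starSet_iff hk, rescale_rescale_inv hk]
    exact hy

theorem linearIsometryEquiv_image_starSet (T : 𝔼 n ≃ₗᵢ[ℝ] 𝔼 n) (m : 𝔼 n → ℝ) :
    T '' starSet m = starSet fun u => m (T.symm u) := by
  ext y
  rw [T.image_eq_preimage_symm]
  simp [starSet, dir_map]

section PartialEquiv

variable {X Y : Type*}

theorem _root_.PartialEquiv.ofSet_trans_ofSet (s t : Set X) :
    (ofSet s).trans (ofSet t) = ofSet (s ∩ t) :=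
  PartialEquiv.ext (fun _ => rfl) (fun _ => rfl) (by simp [trans_source])

theorem _root_.PartialEquiv.trans_ofSet_of_target_subset (e : PartialEquiv X Y) {s : Set Y}
    (h : e.target ⊆ s) : e.trans (ofSet s) = e := by
  rw [trans_ofSet]
  exact restr_eq_of_source_subset fun _ hx => h (e.map_source hx)

theorem _root_.PartialEquiv.symm_trans_ofSet_trans_eqOnSource (e : PartialEquiv X Y) {s : Set X}
    (hs : s ⊆ e.source) : (e.symm.trans (ofSet s)).trans e ≈ ofSet (e '' s) := by
  refine ⟨?_, fun y hy => e.right_inv hy.1.1⟩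
  rw [e.image_eq_target_inter_inv_preimage hs]
  ext y
  simp only [trans_source, symm_source, ofSet_source, ofSet_coe, coe_trans, mem_inter_iff,
    mem_preimage, Function.comp_apply, id_eq]
  exact ⟨fun h => h.1, fun h => ⟨h, e.map_target h.1⟩⟩

end PartialEquiv

section Congruence

variable {r : PartialEquiv (𝔼 n) (𝔼 n) → PartialEquiv (𝔼 n) (𝔼 n) → Prop}
  {α α' β β' γ σ ψ : PartialEquiv (𝔼 n) (𝔼 n)}

theorem _root_.IsCongruence.refl (hr : IsCongruence r) (hα : IsStarPartialHomeo α) : r α α :=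
  hr.1 α hα

theorem _root_.IsCongruence.symm (hr : IsCongruence r) (hα : IsStarPartialHomeo α)
    (hβ : IsStarPartialHomeo β) (h : r α β) : r β α :=
  hr.2.1 α β hα hβ h

theorem _root_.IsCongruence.trans (hr : IsCongruence r) (hα : IsStarPartialHomeo α)
    (hβ : IsStarPartialHomeo β) (hγ : IsStarPartialHomeo γ) (h₁ : r α β) (h₂ : r β γ) :
    r α γ :=
  hr.2.2.1 α β γ hα hβ hγ h₁ h₂

theorem _root_.IsCongruence.of_eqOnSource (hr : IsCongruence r) (hα : IsStarPartialHomeo α)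
    (hα' : IsStarPartialHomeo α') (hβ : IsStarPartialHomeo β) (hβ' : IsStarPartialHomeo β')
    (eα : α ≈ α') (eβ : β ≈ β') (h : r α β) : r α' β' :=
  (hr.2.2.2.1 α α' β β' hα hα' hβ hβ' eα eβ).1 h

theorem _root_.IsCongruence.precomp (hr : IsCongruence r) (hα : IsStarPartialHomeo α)
    (hβ : IsStarPartialHomeo β) (hγ : IsStarPartialHomeo γ) (h : r α β) :
    r (γ.trans α) (γ.trans β) :=
  (hr.2.2.2.2 α β γ hα hβ hγ h).1

theorem _root_.IsCongruence.postcomp (hr : IsCongruence r) (hα : IsStarPartialHomeo α)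
    (hβ : IsStarPartialHomeo β) (hγ : IsStarPartialHomeo γ) (h : r α β) :
    r (α.trans γ) (β.trans γ) :=
  (hr.2.2.2.2 α β γ hα hβ hγ h).2

def _root_.IdentifiesStrictPair
    (r : PartialEquiv (𝔼 n) (𝔼 n) → PartialEquiv (𝔼 n) (𝔼 n) → Prop) : Prop :=
  ∃ A B : Set (𝔼 n), IsStar A ∧ IsStar B ∧ A ⊂ B ∧ r (ofSet A) (ofSet B)

variable (hr : IsCongruence r)
include hr

theorem rel_ofSet_target_symm (hσ : IsStarPartialHomeo σ) {L : Set (𝔼 n)} (hL : IsStar L)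
    (hsub : σ.source ⊆ L) (h : r σ (ofSet L)) : r (ofSet σ.target) σ.symm := by
  have h' := hr.precomp hσ (isStarPartialHomeo_ofSet hL) hσ.symm h
  rw [σ.symm.trans_ofSet_of_target_subset hsub] at h'
  exact hr.of_eqOnSource (hσ.symm.trans hσ) (isStarPartialHomeo_ofSet hσ.2.1) hσ.symm hσ.symm
    (symm_trans_self σ) (eqOnSource_refl _) h'

theorem rel_ofSet_source (hσ : IsStarPartialHomeo σ) {L : Set (𝔼 n)} (hL : IsStar L)
    (hsub : σ.source ⊆ L) (h : r σ (ofSet L)) : r (ofSet σ.source) (ofSet L) := by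
  have h' := hr.precomp (isStarPartialHomeo_ofSet hσ.2.1) hσ.symm hσ
    (rel_ofSet_target_symm hr hσ hL hsub h)
  rw [σ.trans_ofSet_of_target_subset subset_rfl] at h'
  have hσσ : r σ (ofSet σ.source) := hr.of_eqOnSource hσ hσ (hσ.trans hσ.symm)
    (isStarPartialHomeo_ofSet hσ.1) (eqOnSource_refl _) (self_trans_symm σ) h'
  exact hr.trans (isStarPartialHomeo_ofSet hσ.1) hσ (isStarPartialHomeo_ofSet hL)
    (hr.symm hσ (isStarPartialHomeo_ofSet hσ.1) hσσ) h

theorem rel_ofSet_image (hψ : IsStarPartialHomeo ψ) {A B : Set (𝔼 n)} (hA : IsStar A)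
    (hB : IsStar B) (hAs : A ⊆ ψ.source) (hBs : B ⊆ ψ.source)
    (h : r (ofSet A) (ofSet B)) : r (ofSet (ψ '' A)) (ofSet (ψ '' B)) := by
  have hA' := isStarPartialHomeo_ofSet hA
  have hB' := isStarPartialHomeo_ofSet hB
  exact hr.of_eqOnSource ((hψ.symm.trans hA').trans hψ)
    (isStarPartialHomeo_ofSet (hψ.isStar_image hA hAs)) ((hψ.symm.trans hB').trans hψ)
    (isStarPartialHomeo_ofSet (hψ.isStar_image hB hBs))
    (ψ.symm_trans_ofSet_trans_eqOnSource hAs) (ψ.symm_trans_ofSet_trans_eqOnSource hBs)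
    (hr.postcomp (hψ.symm.trans hA') (hψ.symm.trans hB') hψ (hr.precomp hA' hB' hψ.symm h))

theorem rel_ofSet_image_homeomorph (Φ : 𝔼 n ≃ₜ 𝔼 n)
    (hΦ : ∀ (t : ℝ) x, 0 ≤ t → Φ (t • x) = t • Φ x) {A B : Set (𝔼 n)} (hA : IsStar A)
    (hB : IsStar B) (h : r (ofSet A) (ofSet B)) : r (ofSet (Φ '' A)) (ofSet (Φ '' B)) :=
  rel_ofSet_image hr (isStarPartialHomeo_toPartialEquivOfImageEq Φ hΦ (isStar_union hA hB))
    hA hB subset_union_left subset_union_right h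

/-- Cutting `σ` down to `K` on both sides yields an idempotent that misses `x`. -/
theorem identifiesStrictPair_of_mem_of_not_mem (hσ : IsStarPartialHomeo σ) {L : Set (𝔼 n)}
    (hL : IsStar L) (hsub : σ.source ⊆ L) (h : r σ (ofSet L)) {K : Set (𝔼 n)} (hK : IsStar K)
    {x : 𝔼 n} (hx : x ∈ σ.source) (hxK : x ∈ K) (hσx : σ x ∉ K) : IdentifiesStrictPair r := by
  have hK' := isStarPartialHomeo_ofSet hK
  have hσ' : IsStarPartialHomeo (((ofSet K).trans σ).trans (ofSet K)) := (hK'.trans hσ).trans hK'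
  have h' : r (((ofSet K).trans σ).trans (ofSet K)) (ofSet (K ∩ L)) := by
    have := hr.postcomp (hK'.trans hσ) (hK'.trans (isStarPartialHomeo_ofSet hL)) hK'
      (hr.precomp hσ (isStarPartialHomeo_ofSet hL) hK' h)
    rwa [ofSet_trans_ofSet, ofSet_trans_ofSet, inter_right_comm, inter_self] at this
  have hsrc : (((ofSet K).trans σ).trans (ofSet K)).source =
      {y | y ∈ K ∧ y ∈ σ.source ∧ σ y ∈ K} := by
    ext y
    simp only [trans_source, ofSet_source, ofSet_coe, preimage_id, coe_trans, mem_inter_iff,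
      mem_preimage, Function.comp_apply, id_eq]
    exact and_assoc
  have hsub' : (((ofSet K).trans σ).trans (ofSet K)).source ⊆ K ∩ L := by
    rw [hsrc]
    exact fun y hy => ⟨hy.1, hsub hy.2.1⟩
  refine ⟨_, _, hσ'.1, isStar_inter hK hL, ssubset_of_subset_of_ne hsub' fun heq => ?_,
    rel_ofSet_source hr hσ' (isStar_inter hK hL) hsub' h'⟩
  have : x ∈ (((ofSet K).trans σ).trans (ofSet K)).source := heq ▸ ⟨hxK, hsub hx⟩
  rw [hsrc] at this
  exact hσx this.2.2

theorem identifiesStrictPair_of_rel_ofSet (hσ : IsStarPartialHomeo σ) {L : Set (𝔼 n)}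
    (hL : IsStar L) (hsub : σ.source ⊆ L) (h : r σ (ofSet L)) (hne : ¬σ ≈ ofSet L) :
    IdentifiesStrictPair r := by
  by_cases hs : σ.source = L
  swap
  · exact ⟨σ.source, L, hσ.1, hL, ssubset_of_subset_of_ne hsub hs,
      rel_ofSet_source hr hσ hL hsub h⟩
  obtain ⟨x, hx, hσx⟩ : ∃ x ∈ σ.source, σ x ≠ x := by
    by_contra! hfix
    exact hne ⟨hs, hfix⟩
  have hx0 : x ≠ 0 := by
    rintro rfl
    exact hσx hσ.2.2.2.2.1
  have hσx0 : σ x ≠ 0 := fun h0 => hx0 (σ.injOn hx hσ.1.zero_mem (h0.trans hσ.2.2.2.2.1.symm))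
  rcases le_total ‖x‖ ‖σ x‖ with hle | hle
  · obtain ⟨K, hK, hxK, hσxK⟩ := exists_isStar_mem_not_mem hx0 hσx.symm hle
    exact identifiesStrictPair_of_mem_of_not_mem hr hσ hL hsub h hK hx hxK hσxK
  · obtain ⟨K, hK, hσxK, hxK⟩ := exists_isStar_mem_not_mem hσx0 hσx hle
    refine identifiesStrictPair_of_mem_of_not_mem hr hσ.symm hσ.2.1 subset_rfl ?_ hK
      (σ.map_source hx) hσxK (by rwa [σ.left_inv hx])
    exact hr.symm (isStarPartialHomeo_ofSet hσ.2.1) hσ.symm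
      (rel_ofSet_target_symm hr hσ hL hsub h)

theorem subset_source_and_eqOn_or_identifiesStrictPair (hα : IsStarPartialHomeo α)
    (hβ : IsStarPartialHomeo β) (h : r α β) :
    (β.source ⊆ α.source ∧ EqOn α β β.source) ∨ IdentifiesStrictPair r := by
  have hL := isStarPartialHomeo_ofSet hβ.1
  set σ := (ofSet β.source).trans (α.trans β.symm) with hσ_def
  have hσ : IsStarPartialHomeo σ := hL.trans (hα.trans hβ.symm)
  have h' : r σ (ofSet β.source) := by
    have := hr.of_eqOnSource (hα.trans hβ.symm) (hα.trans hβ.symm) (hβ.trans hβ.symm) hL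
      (eqOnSource_refl _) (self_trans_symm β) (hr.postcomp hα hβ hβ.symm h)
    simpa only [ofSet_trans_ofSet, inter_self] using hr.precomp (hα.trans hβ.symm) hL hL this
  by_cases hσL : σ ≈ ofSet β.source
  · have hmem : ∀ x ∈ β.source, x ∈ α.source ∧ α x ∈ β.target ∧ β.symm (α x) = x := by
      intro x hx
      have hxσ : x ∈ σ.source := by rw [hσL.source_eq]; exact hx
      simp only [hσ_def, trans_source, ofSet_source, ofSet_coe, preimage_id, symm_source,
        mem_inter_iff, mem_preimage] at hxσ
      exact ⟨hxσ.2.1, hxσ.2.2, hσL.eqOn (by rw [hσL.source_eq]; exact hx)⟩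
    refine Or.inl ⟨fun x hx => (hmem x hx).1, fun x hx => ?_⟩
    obtain ⟨-, hαx, hfix⟩ := hmem x hx
    rw [← β.right_inv hαx, hfix]
  · exact Or.inr (identifiesStrictPair_of_rel_ofSet hr hσ hβ.1 (fun x hx => hx.1) h' hσL)

theorem identifiesStrictPair_of_not_eqOnSource (hα : IsStarPartialHomeo α)
    (hβ : IsStarPartialHomeo β) (h : r α β) (hne : ¬α ≈ β) : IdentifiesStrictPair r := by
  rcases subset_source_and_eqOn_or_identifiesStrictPair hr hα hβ h with ⟨hβα, hαβ⟩ | hpair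
  · rcases subset_source_and_eqOn_or_identifiesStrictPair hr hβ hα (hr.symm hα hβ h) with
      ⟨hαβ', -⟩ | hpair
    · have hs : α.source = β.source := hαβ'.antisymm hβα
      exact absurd ⟨hs, hs ▸ hαβ⟩ hne
    · exact hpair
  · exact hpair

end Congruence

def StarRel (r : PartialEquiv (𝔼 n) (𝔼 n) → PartialEquiv (𝔼 n) (𝔼 n) → Prop)
    (f g : 𝔼 n → ℝ) : Prop :=
  r (ofSet (starSet f)) (ofSet (starSet g))

theorem StarRel.congr {r : PartialEquiv (𝔼 n) (𝔼 n) → PartialEquiv (𝔼 n) (𝔼 n) → Prop}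
    {f f' g g' : 𝔼 n → ℝ} (h : StarRel r f g) (hf : ∀ u ∈ sphere (0 : 𝔼 n) 1, f u = f' u)
    (hg : ∀ u ∈ sphere (0 : 𝔼 n) 1, g u = g' u) : StarRel r f' g' := by
  rwa [StarRel, ← starSet_congr hf, ← starSet_congr hg]

section StarRel

variable {r : PartialEquiv (𝔼 n) (𝔼 n) → PartialEquiv (𝔼 n) (𝔼 n) → Prop} (hr : IsCongruence r)
  {f g k : 𝔼 n → ℝ}
include hr

theorem starRel_refl (hf : IsRadialFun f) : StarRel r f f :=
  hr.refl (isStarPartialHomeo_ofSet (isStar_starSet hf))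

theorem starRel_symm (hf : IsRadialFun f) (hg : IsRadialFun g) (h : StarRel r f g) :
    StarRel r g f :=
  hr.symm (isStarPartialHomeo_ofSet (isStar_starSet hf))
    (isStarPartialHomeo_ofSet (isStar_starSet hg)) h

theorem starRel_trans (hf : IsRadialFun f) (hg : IsRadialFun g) (hk : IsRadialFun k)
    (h₁ : StarRel r f g) (h₂ : StarRel r g k) : StarRel r f k :=
  hr.trans (isStarPartialHomeo_ofSet (isStar_starSet hf))
    (isStarPartialHomeo_ofSet (isStar_starSet hg)) (isStarPartialHomeo_ofSet (isStar_starSet hk))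
    h₁ h₂

theorem starRel_mul (hk : IsRadialFun k) (hf : IsRadialFun f) (hg : IsRadialFun g)
    (h : StarRel r f g) : StarRel r (fun u => k u * f u) (fun u => k u * g u) := by
  have := rel_ofSet_image_homeomorph hr (rescaleHomeomorph hk) (fun t x ht => rescale_smul k ht x)
    (isStar_starSet hf) (isStar_starSet hg) h
  rwa [rescaleHomeomorph_image_starSet, rescaleHomeomorph_image_starSet] at this

theorem starRel_min (hk : IsRadialFun k) (hf : IsRadialFun f) (hg : IsRadialFun g)
    (h : StarRel r f g) : StarRel r (fun u => min (k u) (f u)) (fun u => min (k u) (g u)) := by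
  have := hr.precomp (isStarPartialHomeo_ofSet (isStar_starSet hf))
    (isStarPartialHomeo_ofSet (isStar_starSet hg)) (isStarPartialHomeo_ofSet (isStar_starSet hk)) h
  rwa [ofSet_trans_ofSet, ofSet_trans_ofSet, starSet_inter, starSet_inter] at this

theorem starRel_comp_linearIsometryEquiv (T : 𝔼 n ≃ₗᵢ[ℝ] 𝔼 n) (hf : IsRadialFun f)
    (hg : IsRadialFun g) (h : StarRel r f g) :
    StarRel r (fun u => f (T.symm u)) (fun u => g (T.symm u)) := by
  have := rel_ofSet_image_homeomorph hr T.toHomeomorph (fun t x _ => map_smul T t x)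
    (isStar_starSet hf) (isStar_starSet hg) h
  rwa [LinearIsometryEquiv.coe_toHomeomorph, linearIsometryEquiv_image_starSet,
    linearIsometryEquiv_image_starSet] at this

theorem exists_starRel_one_of_identifiesStrictPair (hpair : IdentifiesStrictPair r) :
    ∃ h, IsRadialFun h ∧ (∀ u ∈ sphere (0 : 𝔼 n) 1, h u ≤ 1) ∧ StarRel r h (fun _ => 1) ∧
      ∃ u₀ ∈ sphere (0 : 𝔼 n) 1, h u₀ < 1 := by
  obtain ⟨A, B, hA, hB, hAB, hrel⟩ := hpair
  obtain ⟨hle, u₀, hu₀, hlt⟩ := exists_radial_lt_of_ssubset hA hB hAB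
  have ha := hA.isRadialFun_radial
  have hb := hB.isRadialFun_radial
  have hab : StarRel r (radial A) (radial B) := by
    rwa [StarRel, ← hA.eq_starSet_radial, ← hB.eq_starSet_radial]
  refine ⟨fun u => (radial B u)⁻¹ * radial A u, hb.inv.mul ha,
    fun u hu => (inv_mul_le_one₀ (hb.pos u hu)).2 (hle u hu),
    (starRel_mul hr hb.inv ha hb hab).congr (fun _ _ => rfl)
      fun u hu => inv_mul_cancel₀ (hb.pos u hu).ne',
    u₀, hu₀, (inv_mul_lt_one₀ (hb.pos u₀ hu₀)).2 hlt⟩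

theorem starRel_min_one (hf : IsRadialFun f) (hf₁ : ∀ u ∈ sphere (0 : 𝔼 n) 1, f u ≤ 1)
    (hfr : StarRel r f fun _ => 1) (hg : IsRadialFun g) (hgr : StarRel r g fun _ => 1) :
    StarRel r (fun u => min (f u) (g u)) fun _ => 1 :=
  have hone := isRadialFun_const (n := n) one_pos
  starRel_trans hr (hf.min hg) hf hone ((starRel_min hr hf hg hone hgr).congr (fun _ _ => rfl)
    fun u hu => min_eq_left (hf₁ u hu)) hfr

/-- Rotating `h` so that its dip at `u₀` covers each direction, and taking the minimum over a
finite subcover of the sphere. -/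
theorem exists_starRel_one_forall_le {h : 𝔼 n → ℝ} (hh : IsRadialFun h)
    (hh₁ : ∀ u ∈ sphere (0 : 𝔼 n) 1, h u ≤ 1) (hrel : StarRel r h fun _ => 1) {u₀ : 𝔼 n}
    (hu₀ : u₀ ∈ sphere (0 : 𝔼 n) 1) {θ : ℝ} (hθ : h u₀ < θ) :
    ∃ H, IsRadialFun H ∧ StarRel r H (fun _ => 1) ∧ ∀ u ∈ sphere (0 : 𝔼 n) 1, H u ≤ θ := by
  set T : 𝔼 n → 𝔼 n ≃ₗᵢ[ℝ] 𝔼 n := fun v => (ℝ ∙ (u₀ - v))ᗮ.reflection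
  set F : 𝔼 n → 𝔼 n → ℝ := fun v u => h ((T v).symm u)
  set 𝒮 : Set (𝔼 n → ℝ) :=
    {H | IsRadialFun H ∧ (∀ u ∈ sphere (0 : 𝔼 n) 1, H u ≤ 1) ∧ StarRel r H fun _ => 1}
  have hone := isRadialFun_const (n := n) one_pos
  have hF : ∀ v, F v ∈ 𝒮 := fun v =>
    ⟨hh.comp_linearIsometryEquiv _, fun u hu => hh₁ _ (by simpa using hu),
      starRel_comp_linearIsometryEquiv hr (T v) hh hone hrel⟩
  have hmin : ∀ H₁ ∈ 𝒮, ∀ H₂ ∈ 𝒮, H₁ ⊓ H₂ ∈ 𝒮 := fun _ h₁ _ h₂ =>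
    ⟨h₁.1.min h₂.1, fun u hu => min_le_of_left_le (h₁.2.1 u hu),
      starRel_min_one hr h₁.1 h₁.2.1 h₁.2.2 h₂.1 h₂.2.2⟩
  have hnhds : ∀ v ∈ sphere (0 : 𝔼 n) 1, {u | F v u < θ} ∈ 𝓝[sphere 0 1] v := fun v hv => by
    have hv' : (T v).symm v = u₀ := (T v).symm_apply_eq.2 (Submodule.reflection_sub (by
      rw [mem_sphere_zero_iff_norm.1 hu₀, mem_sphere_zero_iff_norm.1 hv])).symm
    exact Filter.Tendsto.eventually_lt_const (by simpa [F, hv'] using hθ)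
      ((hF v).1.continuousOn v hv)
  obtain ⟨t, ht⟩ := (isCompact_sphere (0 : 𝔼 n) 1).elim_nhdsWithin_subcover' _ hnhds
  have htne : t.Nonempty := by
    obtain ⟨v, hv, -⟩ := mem_iUnion₂.1 (ht hu₀)
    exact ⟨v, hv⟩
  have hH := Finset.inf'_mem 𝒮 hmin t htne (fun v => F v) fun v _ => hF v
  refine ⟨_, hH.1, hH.2.2, fun u hu => ?_⟩
  obtain ⟨v, hv, hvu⟩ := mem_iUnion₂.1 (ht hu)
  exact (Finset.inf'_le (fun v : sphere (0 : 𝔼 n) 1 => F v) hv u).trans hvu.le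

theorem exists_starRel_const_one (hpair : IdentifiesStrictPair r) :
    ∃ θ : ℝ, 0 < θ ∧ θ < 1 ∧ StarRel r (fun _ => θ) (fun _ => 1) := by
  obtain ⟨h, hh, hh₁, hrel, u₀, hu₀, hlt⟩ := exists_starRel_one_of_identifiesStrictPair hr hpair
  obtain ⟨θ, hhθ, hθ₁⟩ := exists_between hlt
  have hθ₀ : 0 < θ := (hh.pos u₀ hu₀).trans hhθ
  obtain ⟨H, hH, hHrel, hHθ⟩ := exists_starRel_one_forall_le hr hh hh₁ hrel hu₀ hhθ
  have hθ := isRadialFun_const (n := n) hθ₀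
  have hone := isRadialFun_const (n := n) one_pos
  have hHθ' : StarRel r H fun _ => θ :=
    (starRel_min hr hθ hH hone hHrel).congr (fun u hu => min_eq_right (hHθ u hu))
      fun _ _ => min_eq_left hθ₁.le
  exact ⟨θ, hθ₀, hθ₁, starRel_trans hr hθ hH hone (starRel_symm hr hH hθ hHθ') hHrel⟩

theorem starRel_const_pow {θ : ℝ} (hθ : 0 < θ) (h : StarRel r (fun _ => θ) (fun _ => 1))
    (k : ℕ) : StarRel r (fun _ => θ ^ k) (fun _ => 1) := by
  have hone := isRadialFun_const (n := n) one_pos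
  induction k with
  | zero => simpa only [pow_zero] using starRel_refl hr hone
  | succ k ih =>
    exact starRel_trans hr (isRadialFun_const (pow_pos hθ _)) (isRadialFun_const (pow_pos hθ k))
      hone ((starRel_mul hr (isRadialFun_const (pow_pos hθ k)) (isRadialFun_const hθ) hone
        h).congr (fun _ _ => (pow_succ θ k).symm) fun _ _ => mul_one _) ih

theorem starRel_const_of_le (hpair : IdentifiesStrictPair r) {c C : ℝ} (hc : 0 < c)
    (hcC : c ≤ C) : StarRel r (fun _ => c) (fun _ => C) := by
  obtain ⟨θ, hθ₀, hθ₁, hθ⟩ := exists_starRel_const_one hr hpair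
  have hC : 0 < C := hc.trans_le hcC
  obtain ⟨k, hk⟩ := exists_pow_lt_of_lt_one (div_pos hc hC) hθ₁
  have hCk : C * θ ^ k ≤ c := by
    rw [lt_div_iff₀ hC] at hk
    linarith
  have hc' := isRadialFun_const (n := n) hc
  have hC' := isRadialFun_const (n := n) hC
  have hCθ := isRadialFun_const (n := n) (mul_pos hC (pow_pos hθ₀ k))
  have h₁ : StarRel r (fun _ => C * θ ^ k) (fun _ => C) :=
    (starRel_mul hr hC' (isRadialFun_const (pow_pos hθ₀ k)) (isRadialFun_const one_pos)
      (starRel_const_pow hr hθ₀ hθ k)).congr (fun _ _ => rfl) fun _ _ => mul_one C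
  have h₂ : StarRel r (fun _ => C * θ ^ k) (fun _ => c) :=
    (starRel_min hr hc' hCθ hC' h₁).congr (fun _ _ => min_eq_right hCk) fun _ _ => min_eq_left hcC
  exact starRel_trans hr hc' hCθ hC' (starRel_symm hr hCθ hc' h₂) h₁

theorem exists_starRel_const (hpair : IdentifiesStrictPair r) (hf : IsRadialFun f) :
    ∃ c, 0 < c ∧ StarRel r f (fun _ => c) := by
  obtain ⟨c, hc, hcf⟩ := hf.exists_const_le
  obtain ⟨C, hfC⟩ := hf.exists_le_const
  have hc' := isRadialFun_const (n := n) hc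
  have h := starRel_min hr hf hc' (isRadialFun_const (hc.trans_le (le_max_right C c)))
    (starRel_const_of_le hr hpair hc (le_max_right C c))
  exact ⟨c, hc, starRel_symm hr hc' hf (h.congr (fun u hu => min_eq_right (hcf u hu))
    fun u hu => min_eq_left ((hfC u hu).trans (le_max_left C c)))⟩

theorem starRel_of_identifiesStrictPair (hpair : IdentifiesStrictPair r) (hf : IsRadialFun f)
    (hg : IsRadialFun g) : StarRel r f g := by
  obtain ⟨c, hc, hfc⟩ := exists_starRel_const hr hpair hf
  obtain ⟨d, hd, hgd⟩ := exists_starRel_const hr hpair hg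
  have hc' := isRadialFun_const (n := n) hc
  have hd' := isRadialFun_const (n := n) hd
  have hcd : StarRel r (fun _ => c) (fun _ => d) := by
    rcases le_total c d with h | h
    · exact starRel_const_of_le hr hpair hc h
    · exact starRel_symm hr hd' hc' (starRel_const_of_le hr hpair hd h)
  exact starRel_trans hr hf hc' hg hfc
    (starRel_trans hr hc' hd' hg hcd (starRel_symm hr hg hd' hgd))

end StarRel

end StarBody

theorem stmt_17_general (n : ℕ)
    (r : PartialEquiv (EuclideanSpace ℝ (Fin n)) (EuclideanSpace ℝ (Fin n)) →
         PartialEquiv (EuclideanSpace ℝ (Fin n)) (EuclideanSpace ℝ (Fin n)) → Prop)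
    (hr : IsCongruence r)
    (hnontriv : ∃ α β : PartialEquiv (EuclideanSpace ℝ (Fin n)) (EuclideanSpace ℝ (Fin n)),
      IsStarPartialHomeo α ∧ IsStarPartialHomeo β ∧ r α β ∧ ¬(α ≈ β)) :
    ∀ L₁ L₂ : Set (EuclideanSpace ℝ (Fin n)), IsStar L₁ → IsStar L₂ →
      r (PartialEquiv.ofSet L₁) (PartialEquiv.ofSet L₂) := by
  obtain ⟨α, β, hα, hβ, hαβ, hne⟩ := hnontriv
  have hpair := StarBody.identifiesStrictPair_of_not_eqOnSource hr hα hβ hαβ hne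
  intro L₁ L₂ hL₁ hL₂
  have h := StarBody.starRel_of_identifiesStrictPair hr hpair hL₁.isRadialFun_radial
    hL₂.isRadialFun_radial
  rwa [StarBody.StarRel, ← hL₁.eq_starSet_radial, ← hL₂.eq_starSet_radial] at h

theorem stmt_17 (n : ℕ) (hn : 1 ≤ n)
    (r : PartialEquiv (EuclideanSpace ℝ (Fin n)) (EuclideanSpace ℝ (Fin n)) →
         PartialEquiv (EuclideanSpace ℝ (Fin n)) (EuclideanSpace ℝ (Fin n)) → Prop)
    (hr : IsCongruence r)
    (hnontriv : ∃ α β : PartialEquiv (EuclideanSpace ℝ (Fin n)) (EuclideanSpace ℝ (Fin n)),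
      IsStarPartialHomeo α ∧ IsStarPartialHomeo β ∧ r α β ∧ ¬(α ≈ β)) :
    ∀ L₁ L₂ : Set (EuclideanSpace ℝ (Fin n)), IsStar L₁ → IsStar L₂ →
      r (PartialEquiv.ofSet L₁) (PartialEquiv.ofSet L₂) :=
  stmt_17_general n r hr hnontriv
end
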